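/- arXiv:2407.08203 — 15 statements merged into one kernel-verified Lean document; each statement's English description precedes it below -/
import Mathlib

section
/- Fix an integer k ≥ 0 and let M encode the k-GM tree MT(k). Then: (1) for every binary word w, M(w) is a k-GM triple (a,b,c) with b > a and b > c; and (2) for every k-GM triple (a,b,c) with b > a and b > c there is exactly one binary word w with M(w) = (a,b,c); in particular M is injective. -/
/-- A `k`-generalized Markov triple: positive integers satisfying the `k`-GM equation. -/
def IsGMTriple (k a b c : ℤ) : Prop :=
  0 < a ∧ 0 < b ∧ 0 < c ∧
    a ^ 2 + b ^ 2 + c ^ 2 + k * (b * c + c * a + a * b) = (3 + 3 * k) * a * b * c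

/-- One generation step of the `k`-GM tree `MT(k)`. -/
def gmStep (k : ℤ) (t : ℤ × ℤ × ℤ) (d : Bool) : ℤ × ℤ × ℤ :=
  match t, d with
  | (a, b, c), false => (a, (3 + 3 * k) * a * b - c - k * b - k * a, b)
  | (a, b, c), true  => (b, (3 + 3 * k) * b * c - a - k * c - k * b, c)

/-- The `k`-GM tree `MT(k)`, encoded on binary words: `Mtree k (w ++ [d]) = gmStep k (Mtree k w) d`
and `Mtree k [] = (1, k+2, 1)`. -/
def Mtree (k : ℤ) (w : List Bool) : ℤ × ℤ × ℤ :=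
  w.foldl (gmStep k) (1, k + 2, 1)



lemma keyIneq {k : ℤ} (hk : 0 ≤ k) {x y : ℤ} (hx : 1 ≤ x) (hxy : x ≤ y) (hy : 2 ≤ y) :
    x ^ 2 + 2 * y ^ 2 + 2 * k * x * y + k * y ^ 2 < 3 * (1 + k) * x * y ^ 2 := by
  have hx0 : (0:ℤ) < x := by linarith
  have hy0 : (0:ℤ) < y := by linarith
  nlinarith [mul_nonneg (mul_nonneg hk (mul_nonneg hx0.le hy0.le)) (by linarith : (0:ℤ) ≤ y - 1),
    mul_nonneg (mul_nonneg hk (mul_nonneg hy0.le hy0.le)) (by linarith : (0:ℤ) ≤ x - 1),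
    mul_nonneg (mul_nonneg hy0.le hy0.le) (by linarith : (0:ℤ) ≤ x - 1),
    mul_pos hx0 (mul_pos hy0 (by linarith : (0:ℤ) < y - 1))]

lemma eq_case {k : ℤ} (hk : 0 ≤ k) {a b : ℤ} (ha : 0 < a) (hb : 0 < b) (hab : a < b)
    (heq : a^2 + b^2 + a^2 + k*(b*a + a*a + a*b) = (3+3*k)*a*b*a) : a = 1 ∧ b = k + 2 := by
  rcases lt_or_ge a 2 with h1 | h2
  · have ha1 : a = 1 := by omega
    subst ha1
    have hfac : (b - 1) * (b - (k+2)) = 0 := by linear_combination heq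
    rcases mul_eq_zero.1 hfac with h | h
    · omega
    · exact ⟨rfl, by linarith⟩
  · exfalso
    set c' : ℤ := (3+3*k)*a*a - 2*k*a - b with hc'
    have hprod : b * c' = (2+k)*a^2 := by rw [hc']; linear_combination -heq
    have hc'pos : 0 < c' := by nlinarith
    have key : (a - b) * (a - c') = 3*a^2*(1+k)*(1-a) := by rw [hc']; linear_combination -heq
    have hca : c' < a := by
      by_contra hcon
      push_neg at hcon
      nlinarith [key, mul_nonneg (by linarith : (0:ℤ) ≤ b - a) (by linarith : (0:ℤ) ≤ c' - a),
        mul_pos (mul_pos (by positivity : (0:ℤ) < 3*a^2) (by linarith : (0:ℤ) < 1+k))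
          (by linarith : (0:ℤ) < a - 1)]
    have hF : c'^2 + 2*a^2 + 2*k*c'*a + k*a^2 = 3*(1+k)*c'*a^2 := by
      linear_combination c' * hc' - hprod
    have := keyIneq hk (by linarith : (1:ℤ) ≤ c') hca.le h2
    linarith

lemma Mtree_concat (k : ℤ) (v : List Bool) (d : Bool) :
    Mtree k (v ++ [d]) = gmStep k (Mtree k v) d := by
  simp [Mtree]

lemma good_step {k : ℤ} (hk : 0 ≤ k) {t : ℤ × ℤ × ℤ}
    (h : IsGMTriple k t.1 t.2.1 t.2.2 ∧ t.1 < t.2.1 ∧ t.2.2 < t.2.1) (d : Bool) :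
    IsGMTriple k (gmStep k t d).1 (gmStep k t d).2.1 (gmStep k t d).2.2 ∧
      (gmStep k t d).1 < (gmStep k t d).2.1 ∧ (gmStep k t d).2.2 < (gmStep k t d).2.1 := by
  obtain ⟨a, b, c⟩ := t
  obtain ⟨⟨ha, hb, hc, heq⟩, hab, hcb⟩ := h
  simp only at ha hb hc heq hab hcb
  cases d
  · have hgt : b < (3 + 3 * k) * a * b - c - k * b - k * a := by
      nlinarith [mul_nonneg (mul_nonneg (by linarith : (0:ℤ) ≤ 3 + 3*k) hb.le)
          (by linarith : (0:ℤ) ≤ a - 1),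
        mul_nonneg hk (by linarith : (0:ℤ) ≤ b - a),
        mul_nonneg hk hb.le]
    refine ⟨⟨?_, ?_, ?_, ?_⟩, ?_, ?_⟩ <;> simp only [gmStep]
    · exact ha
    · linarith
    · exact hb
    · linear_combination heq
    · linarith
    · exact hgt
  · have hgt : b < (3 + 3 * k) * b * c - a - k * c - k * b := by
      nlinarith [mul_nonneg (mul_nonneg (by linarith : (0:ℤ) ≤ 3 + 3*k) hb.le)
          (by linarith : (0:ℤ) ≤ c - 1),
        mul_nonneg hk (by linarith : (0:ℤ) ≤ b - c),
        mul_nonneg hk hb.le]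
    refine ⟨⟨?_, ?_, ?_, ?_⟩, ?_, ?_⟩ <;> simp only [gmStep]
    · exact hb
    · linarith
    · exact hc
    · linear_combination heq
    · exact hgt
    · linarith

lemma good_all {k : ℤ} (hk : 0 ≤ k) (w : List Bool) :
    IsGMTriple k (Mtree k w).1 (Mtree k w).2.1 (Mtree k w).2.2 ∧
      (Mtree k w).1 < (Mtree k w).2.1 ∧ (Mtree k w).2.2 < (Mtree k w).2.1 := by
  induction w using List.reverseRecOn with
  | nil =>
    refine ⟨⟨?_, ?_, ?_, ?_⟩, ?_, ?_⟩ <;> simp only [Mtree, List.foldl_nil]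
    · exact one_pos
    · linarith
    · exact one_pos
    · ring
    · linarith
    · linarith
  | append_singleton v d ih =>
    rw [Mtree_concat]
    exact good_step hk ih d

lemma exists_word {k : ℤ} (hk : 0 ≤ k) : ∀ n : ℕ, ∀ a b c : ℤ, b.toNat = n →
    IsGMTriple k a b c → a < b → c < b → ∃ w, Mtree k w = (a, b, c) := by
  intro n
  induction n using Nat.strong_induction_on with
  | _ n ih =>
    rintro a b c hn ⟨ha, hb, hc, heq⟩ hab hcb
    rcases lt_trichotomy a c with hac | hac | hac
    · -- a < c : last step is `false`, parent (a, c, c')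
      set c' : ℤ := (3+3*k)*a*c - k*a - k*c - b with hc'
      have hprod : b * c' = a^2 + c^2 + k*c*a := by rw [hc']; linear_combination -heq
      have hc'pos : 0 < c' := by nlinarith
      have hkey : (c - b) * (c - c') = a^2 + 2*c^2 + 2*k*a*c + k*c^2 - 3*(1+k)*a*c^2 := by
        rw [hc']; linear_combination -heq
      have hF := keyIneq hk (by linarith : (1:ℤ) ≤ a) hac.le (by linarith : (2:ℤ) ≤ c)
      have hc'c : c' < c := by
        by_contra hcon
        push_neg at hcon
        nlinarith [hkey, mul_nonneg (by linarith : (0:ℤ) ≤ b - c) (by linarith : (0:ℤ) ≤ c' - c)]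
      have hpeq : a^2 + c^2 + c'^2 + k*(c*c' + c'*a + a*c) = (3+3*k)*a*c*c' := by
        rw [hc']; linear_combination heq
      obtain ⟨w, hw⟩ := ih c.toNat (by omega) a c c' rfl ⟨ha, hc, hc'pos, hpeq⟩ hac hc'c
      refine ⟨w ++ [false], ?_⟩
      rw [Mtree_concat, hw]
      simp only [gmStep, Prod.mk.injEq]
      exact ⟨trivial, by rw [hc']; ring, trivial⟩
    · -- a = c : root triple
      subst hac
      obtain ⟨ha1, hbk⟩ := eq_case hk ha hb hab (by linear_combination heq)
      exact ⟨[], by simp [Mtree, ha1, hbk]⟩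
    · -- c < a : last step is `true`, parent (c', a, c)
      set c' : ℤ := (3+3*k)*a*c - k*a - k*c - b with hc'
      have hprod : b * c' = a^2 + c^2 + k*c*a := by rw [hc']; linear_combination -heq
      have hc'pos : 0 < c' := by nlinarith
      have hkey : (a - b) * (a - c') = c^2 + 2*a^2 + 2*k*c*a + k*a^2 - 3*(1+k)*c*a^2 := by
        rw [hc']; linear_combination -heq
      have hF := keyIneq hk (by linarith : (1:ℤ) ≤ c) hac.le (by linarith : (2:ℤ) ≤ a)
      have hc'a : c' < a := by
        by_contra hcon
        push_neg at hcon
        nlinarith [hkey, mul_nonneg (by linarith : (0:ℤ) ≤ b - a) (by linarith : (0:ℤ) ≤ c' - a)]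
      have hpeq : c'^2 + a^2 + c^2 + k*(a*c + c*c' + c'*a) = (3+3*k)*c'*a*c := by
        rw [hc']; linear_combination heq
      obtain ⟨w, hw⟩ := ih a.toNat (by omega) c' a c rfl ⟨hc'pos, ha, hc, hpeq⟩ hc'a hac
      refine ⟨w ++ [true], ?_⟩
      rw [Mtree_concat, hw]
      simp only [gmStep, Prod.mk.injEq]
      exact ⟨trivial, by rw [hc']; ring, trivial⟩

lemma first_lt_third {k : ℤ} (hk : 0 ≤ k) (v : List Bool) :
    (Mtree k (v ++ [false])).1 < (Mtree k (v ++ [false])).2.2 ∧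
    (Mtree k (v ++ [true])).2.2 < (Mtree k (v ++ [true])).1 := by
  obtain ⟨_, h1, h2⟩ := good_all hk v
  rcases ht : Mtree k v with ⟨p1, p2, p3⟩
  rw [ht] at h1 h2
  simp only [Mtree_concat, ht, gmStep]
  exact ⟨h1, h2⟩

lemma unique_aux {k : ℤ} (hk : 0 ≤ k) : ∀ n : ℕ, ∀ w w' : List Bool,
    (Mtree k w).2.1.toNat = n → Mtree k w = Mtree k w' → w = w' := by
  intro n
  induction n using Nat.strong_induction_on with
  | _ n ih =>
    intro w w' hn he
    rcases List.eq_nil_or_concat w with rfl | ⟨v, d, rfl⟩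
    · rcases List.eq_nil_or_concat w' with rfl | ⟨v', d', rfl⟩
      · rfl
      · exfalso
        rw [List.concat_eq_append] at he
        cases d'
        · have h := (first_lt_third hk v').1; rw [← he] at h; simp [Mtree] at h
        · have h := (first_lt_third hk v').2; rw [← he] at h; simp [Mtree] at h
    · rcases List.eq_nil_or_concat w' with rfl | ⟨v', d', rfl⟩
      · exfalso
        rw [List.concat_eq_append] at he
        cases d
        · have h := (first_lt_third hk v).1; rw [he] at h; simp [Mtree] at h
        · have h := (first_lt_third hk v).2; rw [he] at h; simp [Mtree] at h
      · rw [List.concat_eq_append] at he hn ⊢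
        rw [List.concat_eq_append] at he ⊢
        have hd : d = d' := by
          cases d <;> cases d'
          · rfl
          · exfalso
            have h1 := (first_lt_third hk v).1
            have h2 := (first_lt_third hk v').2
            rw [← he] at h2; linarith
          · exfalso
            have h1 := (first_lt_third hk v).2
            have h2 := (first_lt_third hk v').1
            rw [← he] at h2; linarith
          · rfl
        subst hd
        rcases ht : Mtree k v with ⟨p1, p2, p3⟩
        rcases ht' : Mtree k v' with ⟨q1, q2, q3⟩
        have hgv := good_all hk v
        have hgc := good_all hk (v ++ [d])
        rw [ht] at hgv
        rw [Mtree_concat, ht] at hgc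
        rw [Mtree_concat, Mtree_concat, ht, ht'] at he
        rw [Mtree_concat, ht] at hn
        obtain ⟨⟨hp1, hp2, hp3, _⟩, _, _⟩ := hgv
        cases d
        · simp only [gmStep, Prod.mk.injEq] at he
          obtain ⟨e1, e2, e3⟩ := he
          have e4 : p3 = q3 := by rw [e1, e3] at e2; linarith
          have hmid : p2 < (3+3*k)*p1*p2 - p3 - k*p2 - k*p1 := hgc.2.2
          have hn' : ((3+3*k)*p1*p2 - p3 - k*p2 - k*p1).toNat = n := hn
          have hv : v = v' := by
            refine ih p2.toNat ?_ v v' (by rw [ht]) (by rw [ht, ht']; exact Prod.ext e1 (Prod.ext e3 e4))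
            rw [← hn']
            exact (Int.toNat_lt_toNat (by linarith)).mpr hmid
          rw [hv]
        · simp only [gmStep, Prod.mk.injEq] at he
          obtain ⟨e1, e2, e3⟩ := he
          have e4 : p1 = q1 := by rw [e1, e3] at e2; linarith
          have hmid : p2 < (3+3*k)*p2*p3 - p1 - k*p3 - k*p2 := hgc.2.1
          have hn' : ((3+3*k)*p2*p3 - p1 - k*p3 - k*p2).toNat = n := hn
          have hv : v = v' := by
            refine ih p2.toNat ?_ v v' (by rw [ht]) (by rw [ht, ht']; exact Prod.ext e4 (Prod.ext e1 e3))
            rw [← hn']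
            exact (Int.toNat_lt_toNat (by linarith)).mpr hmid
          rw [hv]

theorem stmt0 (k : ℤ) (hk : 0 ≤ k) :
    (∀ w : List Bool,
        IsGMTriple k (Mtree k w).1 (Mtree k w).2.1 (Mtree k w).2.2 ∧
        (Mtree k w).1 < (Mtree k w).2.1 ∧ (Mtree k w).2.2 < (Mtree k w).2.1) ∧
    (∀ a b c : ℤ, IsGMTriple k a b c → a < b → c < b →
        ∃! w : List Bool, Mtree k w = (a, b, c)) ∧
    Function.Injective (Mtree k) := by
  refine ⟨fun w => good_all hk w, ?_, ?_⟩
  · intro a b c h hab hcb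
    obtain ⟨w, hw⟩ := exists_word hk b.toNat a b c rfl h hab hcb
    exact ⟨w, hw, fun w' hw' => unique_aux hk _ w' w rfl (hw'.trans hw.symm)⟩
  · intro w w' h
    exact unique_aux hk _ w w' rfl h
end

section
/- Fix an integer k ≥ 0. Define μ(a,b,c) = (a, (3+3k)ac − b − kc − ka, c) (for a k-GM triple this middle entry equals (a² + kac + c²)/b). Then for every binary word w, μ(M(w)) = M†(w); that is, μ induces the canonical graph isomorphism from the k-GM tree MT(k) to the inverse k-GM tree MT†(k). -/
/-- One generation step of the inverse `k`-GM tree `MT†(k)`. -/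
def gmDagStep (k : ℤ) (t : ℤ × ℤ × ℤ) (d : Bool) : ℤ × ℤ × ℤ :=
  match t, d with
  | (a, b, c), false => (a, c, (3 + 3 * k) * a * c - b - k * c - k * a)
  | (a, b, c), true  => ((3 + 3 * k) * a * c - b - k * c - k * a, a, c)

/-- The inverse `k`-GM tree `MT†(k)`, encoded on binary words. -/
def MdagTree (k : ℤ) (w : List Bool) : ℤ × ℤ × ℤ :=
  w.foldl (gmDagStep k) (1, 1, 1)

/-- The map `μ(a,b,c) = (a, (3+3k)ac − b − kc − ka, c)`. -/
def muMap (k : ℤ) (t : ℤ × ℤ × ℤ) : ℤ × ℤ × ℤ :=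
  match t with
  | (a, b, c) => (a, (3 + 3 * k) * a * c - b - k * c - k * a, c)

lemma mu_step (k : ℤ) (t : ℤ × ℤ × ℤ) (d : Bool) :
    muMap k (gmStep k t d) = gmDagStep k (muMap k t) d := by
  obtain ⟨a, b, c⟩ := t
  cases d <;> simp [muMap, gmStep, gmDagStep, Prod.ext_iff] <;> constructor <;> ring

lemma mu_foldl (k : ℤ) (w : List Bool) (t : ℤ × ℤ × ℤ) :
    muMap k (w.foldl (gmStep k) t) = w.foldl (gmDagStep k) (muMap k t) := by
  induction w generalizing t with
  | nil => rfl
  | cons d w ih => simp [List.foldl, ih, mu_step]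

theorem stmt2 (k : ℤ) (hk : 0 ≤ k) :
    ∀ w : List Bool, muMap k (Mtree k w) = MdagTree k w := by
  intro w
  have : muMap k (1, k + 2, 1) = (1, 1, 1) := by simp [muMap]; ring
  rw [Mtree, MdagTree, mu_foldl, this]
end

section
/- Fix an integer k ≥ 0. The maps ψ and ψ' on 2×2 integer matrices are mutually inverse bijections, and for every 2×2 integer matrix X: X is a k-MM matrix if and only if ψ(X) is a k-GC matrix. In particular, ψ restricts to a bijection from the set of k-MM matrices onto the set of k-GC matrices (note that ψ preserves the (1,2)-entry). -/
open Matrix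

/-- `2 × 2` integer matrices. -/
abbrev M2 : Type := Matrix (Fin 2) (Fin 2) ℤ

/-- A `k`-generalized Markov number: a component of some `k`-GM triple. -/
def IsGMNumber (k n : ℤ) : Prop :=
  ∃ a b c : ℤ, IsGMTriple k a b c ∧ (n = a ∨ n = b ∨ n = c)

/-- A `k`-GC matrix: an element of `SL(2,ℤ)` whose `(1,2)`-entry is a `k`-GM number and whose
trace is `(3k+3)·p₁₂ − k`. -/
def IsGCMatrix (k : ℤ) (P : M2) : Prop :=
  P.det = 1 ∧ IsGMNumber k (P 0 1) ∧ P.trace = (3 * k + 3) * P 0 1 - k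

/-- A `k`-MM matrix: an element of `SL(2,ℤ)` whose `(1,2)`-entry is a `k`-GM number and whose
trace is `−k`. -/
def IsMMMatrix (k : ℤ) (X : M2) : Prop :=
  X.det = 1 ∧ IsGMNumber k (X 0 1) ∧ X.trace = -k

/-- The matrix `S = [[k, 0], [3k²+3k, k]]`. -/
def Smat (k : ℤ) : M2 := !![k, 0; 3 * k ^ 2 + 3 * k, k]

/-- The matrix `T = [[−1, 0], [3k+3, −1]]`. -/
def Tmat (k : ℤ) : M2 := !![-1, 0; 3 * k + 3, -1]

/-- A `k`-GC triple. -/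
def IsGCTriple (k : ℤ) (P Q R : M2) : Prop :=
  IsGCMatrix k P ∧ IsGCMatrix k Q ∧ IsGCMatrix k R ∧
    Q = P * R - Smat k ∧ IsGMTriple k (P 0 1) (Q 0 1) (R 0 1)

/-- A `k`-MM triple. -/
def IsMMTriple (k : ℤ) (X Y Z : M2) : Prop :=
  IsMMMatrix k X ∧ IsMMMatrix k Y ∧ IsMMMatrix k Z ∧
    X * Y * Z = Tmat k ∧ IsGMTriple k (X 0 1) (Y 0 1) (Z 0 1)

/-- The map `ψ`. -/
def psi (k : ℤ) (m : M2) : M2 :=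
  !![-m 0 0 + k * m 0 1 - k, m 0 1;
     m 1 0 - (k + 3) * m 0 0 + k * (2 * k + 3) * (m 0 1 - 1),
     -m 1 1 + (2 * k + 3) * m 0 1 - k]

/-- The map `ψ'` (the inverse of `ψ`). -/
def psi' (k : ℤ) (m : M2) : M2 :=
  !![-m 0 0 + k * m 0 1 - k, m 0 1;
     m 1 0 - (k + 3) * m 0 0 - k ^ 2 * (m 0 1 - 1),
     -m 1 1 + (2 * k + 3) * m 0 1 - k]

theorem stmt3 (k : ℤ) (hk : 0 ≤ k) :
    (∀ m : M2, psi' k (psi k m) = m) ∧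
    (∀ m : M2, psi k (psi' k m) = m) ∧
    (∀ X : M2, IsMMMatrix k X ↔ IsGCMatrix k (psi k X)) := by
  refine ⟨?_, ?_, ?_⟩
  · intro m
    ext i j
    fin_cases i <;> fin_cases j <;>
      simp [psi, psi', Matrix.cons_val_zero, Matrix.cons_val_one] <;> ring
  · intro m
    ext i j
    fin_cases i <;> fin_cases j <;>
      simp [psi, psi', Matrix.cons_val_zero, Matrix.cons_val_one] <;> ring
  · intro X
    have e00 : psi k X 0 0 = -X 0 0 + k * X 0 1 - k := rfl
    have e01 : psi k X 0 1 = X 0 1 := rfl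
    have e10 : psi k X 1 0 = X 1 0 - (k + 3) * X 0 0 + k * (2 * k + 3) * (X 0 1 - 1) := rfl
    have e11 : psi k X 1 1 = -X 1 1 + (2 * k + 3) * X 0 1 - k := rfl
    constructor
    · rintro ⟨hdet, hgm, htr⟩
      rw [Matrix.det_fin_two] at hdet
      rw [Matrix.trace_fin_two] at htr
      refine ⟨?_, ?_, ?_⟩
      · rw [Matrix.det_fin_two, e00, e01, e10, e11]
        have h : X 1 1 = -k - X 0 0 := by linarith
        rw [h] at hdet ⊢
        nlinarith [hdet]
      · rwa [e01]
      · rw [Matrix.trace_fin_two, e00, e01, e11]; linarith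
    · rintro ⟨hdet, hgm, htr⟩
      rw [Matrix.det_fin_two, e00, e01, e10, e11] at hdet
      rw [Matrix.trace_fin_two, e00, e01, e11] at htr
      refine ⟨?_, ?_, ?_⟩
      · rw [Matrix.det_fin_two]
        have h : X 1 1 = -k - X 0 0 := by linarith
        rw [h] at hdet ⊢
        nlinarith [hdet]
      · rwa [e01] at hgm
      · rw [Matrix.trace_fin_two]; linarith
end

section
/- Fix an integer k ≥ 0. If (X,Y,Z) is a k-MM triple, then (ψ(X), ψ(Y), ψ(Z)) is a k-GC triple. Conversely, if (P,Q,R) is a k-GC triple, then (ψ'(P), ψ'(Q), ψ'(R)) is a k-MM triple. -/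
open Matrix

lemma m2_eta (X : M2) : ∃ a b c d : ℤ, X = !![a, b; c, d] :=
  ⟨_, _, _, _, Matrix.eta_fin_two X⟩

lemma psi_GC (k : ℤ) (m : M2) (h : IsMMMatrix k m) : IsGCMatrix k (psi k m) := by
  obtain ⟨hd, hg, ht⟩ := h
  obtain ⟨a, b, c, d, rfl⟩ := m2_eta m
  rw [Matrix.det_fin_two_of] at hd
  rw [Matrix.trace_fin_two_of] at ht
  refine ⟨?_, ?_, ?_⟩
  · simp [psi, Matrix.det_fin_two_of]
    linear_combination hd + (k - b * k) * ht
  · simpa [psi] using hg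
  · simp [psi, Matrix.trace_fin_two_of]
    linear_combination (-1 : ℤ) * ht

lemma psi'_MM (k : ℤ) (m : M2) (h : IsGCMatrix k m) : IsMMMatrix k (psi' k m) := by
  obtain ⟨hd, hg, ht⟩ := h
  obtain ⟨a, b, c, d, rfl⟩ := m2_eta m
  rw [Matrix.det_fin_two_of] at hd
  rw [Matrix.trace_fin_two_of] at ht
  simp at ht
  refine ⟨?_, ?_, ?_⟩
  · simp [psi', Matrix.det_fin_two_of]
    linear_combination hd + (k - b * k) * ht
  · simpa [psi'] using hg
  · simp [psi', Matrix.trace_fin_two_of]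
    linear_combination (-1 : ℤ) * ht

set_option maxHeartbeats 2000000 in
theorem stmt4 (k : ℤ) (hk : 0 ≤ k) :
    (∀ X Y Z : M2, IsMMTriple k X Y Z →
        IsGCTriple k (psi k X) (psi k Y) (psi k Z)) ∧
    (∀ P Q R : M2, IsGCTriple k P Q R →
        IsMMTriple k (psi' k P) (psi' k Q) (psi' k R)) := by
  constructor
  · rintro X Y Z ⟨hX, hY, hZ, hprod, htrip⟩
    have hY2 : Y = X.adjugate * (Tmat k * Z.adjugate) := by
      have hadjX : X.adjugate * X = 1 := by rw [Matrix.adjugate_mul, hX.1, one_smul]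
      have hadjZ : Z * Z.adjugate = 1 := by rw [Matrix.mul_adjugate, hZ.1, one_smul]
      calc Y = (X.adjugate * X) * Y * (Z * Z.adjugate) := by
              rw [hadjX, hadjZ, one_mul, mul_one]
        _ = X.adjugate * (X * Y * Z * Z.adjugate) := by simp only [Matrix.mul_assoc]
        _ = X.adjugate * (Tmat k * Z.adjugate) := by rw [hprod]
    subst hY2
    refine ⟨psi_GC k X hX, psi_GC k _ hY, psi_GC k Z hZ, ?_, ?_⟩
    · obtain ⟨a1, a2, a3, a4, rfl⟩ := m2_eta X
      obtain ⟨c1, c2, c3, c4, rfl⟩ := m2_eta Z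
      have htX := hX.2.2
      have htZ := hZ.2.2
      have htY := hY.2.2
      rw [Matrix.trace_fin_two_of] at htX htZ
      have h4 : a4 = -k - a1 := by linarith
      subst h4
      have h4' : c4 = -k - c1 := by linarith
      subst h4'
      rw [Matrix.trace_fin_two] at htY
      simp [Tmat, Matrix.adjugate_fin_two_of, Matrix.mul_apply, Fin.sum_univ_succ] at htY
      ext i j
      fin_cases i <;> fin_cases j <;>
        simp [psi, Smat, Tmat, Matrix.adjugate_fin_two_of, Matrix.mul_apply,
          Matrix.sub_apply, Fin.sum_univ_succ]
      all_goals try ring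
      all_goals linear_combination k * htY
    · simpa [psi] using htrip
  · rintro P Q R ⟨hP, hQ, hR, hQeq, htrip⟩
    subst hQeq
    have hMP := psi'_MM k P hP
    have hMQ := psi'_MM k _ hQ
    have hMR := psi'_MM k R hR
    refine ⟨hMP, hMQ, hMR, ?_, ?_⟩
    · have hY2 : psi' k (P * R - Smat k)
          = (psi' k P).adjugate * (Tmat k * (psi' k R).adjugate) := by
        obtain ⟨p1, p2, p3, p4, rfl⟩ := m2_eta P
        obtain ⟨r1, r2, r3, r4, rfl⟩ := m2_eta R
        have htP := hP.2.2
        have htR := hR.2.2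
        have htQ := hQ.2.2
        rw [Matrix.trace_fin_two_of] at htP htR
        simp at htP htR
        have h4 : p4 = (3 * k + 3) * p2 - k - p1 := by linarith
        subst h4
        have h4' : r4 = (3 * k + 3) * r2 - k - r1 := by linarith
        subst h4'
        rw [Matrix.trace_fin_two] at htQ
        simp [Smat, Matrix.mul_apply, Matrix.sub_apply, Fin.sum_univ_succ] at htQ
        ext i j
        fin_cases i <;> fin_cases j <;>
          simp [psi', Smat, Tmat, Matrix.adjugate_fin_two_of, Matrix.mul_apply,
            Matrix.sub_apply, Fin.sum_univ_succ]
        all_goals try ring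
        all_goals linear_combination k * htQ
      rw [hY2]
      have h1 : psi' k P * (psi' k P).adjugate = 1 := by
        rw [Matrix.mul_adjugate, hMP.1, one_smul]
      have h2 : (psi' k R).adjugate * psi' k R = 1 := by
        rw [Matrix.adjugate_mul, hMR.1, one_smul]
      calc psi' k P * ((psi' k P).adjugate * (Tmat k * (psi' k R).adjugate)) * psi' k R
          = (psi' k P * (psi' k P).adjugate) * (Tmat k * ((psi' k R).adjugate * psi' k R)) := by
            simp only [Matrix.mul_assoc]
        _ = Tmat k := by rw [h1, h2, one_mul, Matrix.mul_one]
    · simpa [psi'] using htrip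
end

section
/- Fix an integer k ≥ 0. For every k-MM triple (X,Y,Z), the identities ψ(Y·Z·Y⁻¹) = ψ(X)·ψ(Y) − S and ψ(Y⁻¹·X·Y) = ψ(Y)·ψ(Z) − S hold, where S = [[k, 0], [3k²+3k, k]]. -/
open Matrix

theorem stmt5 (k : ℤ) (hk : 0 ≤ k) (X Y Z : M2) (h : IsMMTriple k X Y Z) :
    psi k (Y * Z * Y⁻¹) = psi k X * psi k Y - Smat k ∧
    psi k (Y⁻¹ * X * Y) = psi k Y * psi k Z - Smat k := by
  obtain ⟨⟨hdX, -, htX⟩, ⟨hdY, -, htY⟩, ⟨-, -, htZ0⟩, hT, -⟩ := h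
  have hdX' : X 0 0 * X 1 1 - X 0 1 * X 1 0 = 1 := by rw [← Matrix.det_fin_two]; exact hdX
  have hdY' : Y 0 0 * Y 1 1 - Y 0 1 * Y 1 0 = 1 := by rw [← Matrix.det_fin_two]; exact hdY
  rw [Matrix.trace_fin_two] at htX htY
  have hx11 : X 1 1 = -k - X 0 0 := by linarith
  have hy11 : Y 1 1 = -k - Y 0 0 := by linarith
  have hdX2 : X 0 0 * (-k - X 0 0) - X 0 1 * X 1 0 = 1 := by rw [← hx11]; exact hdX'
  have hdY2 : Y 0 0 * (-k - Y 0 0) - Y 0 1 * Y 1 0 = 1 := by rw [← hy11]; exact hdY'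
  have hXu : IsUnit X.det := by rw [hdX]; exact isUnit_one
  have hYu : IsUnit Y.det := by rw [hdY]; exact isUnit_one
  have hXinv : X⁻¹ = !![X 1 1, -(X 0 1); -(X 1 0), X 0 0] := by
    rw [Matrix.inv_def, hdX, Matrix.adjugate_fin_two, Ring.inverse_one, one_smul]
  have hYinv : Y⁻¹ = !![Y 1 1, -(Y 0 1); -(Y 1 0), Y 0 0] := by
    rw [Matrix.inv_def, hdY, Matrix.adjugate_fin_two, Ring.inverse_one, one_smul]
  have hZeq : Z = Y⁻¹ * (X⁻¹ * Tmat k) := by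
    rw [← hT, mul_assoc, Matrix.nonsing_inv_mul_cancel_left _ _ hXu,
      Matrix.nonsing_inv_mul_cancel_left _ _ hYu]
  have htZ : (Y⁻¹ * (X⁻¹ * Tmat k)).trace = -k := by rw [← hZeq]; exact htZ0
  rw [hXinv, hYinv] at htZ
  rw [Matrix.trace_fin_two] at htZ
  simp only [Tmat, Matrix.mul_apply, Fin.sum_univ_two, Matrix.cons_val', Matrix.cons_val_zero,
    Matrix.cons_val_one, Matrix.head_cons, Matrix.head_fin_const, Matrix.empty_val',
    Matrix.cons_val_fin_one, Matrix.of_apply] at htZ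
  rw [hx11, hy11] at htZ
  rw [hZeq, hXinv, hYinv]
  constructor
  · ext i j
    fin_cases i <;> fin_cases j <;>
      simp only [psi, Smat, Tmat, Matrix.mul_apply, Matrix.sub_apply, Fin.sum_univ_two,
        Matrix.cons_val', Matrix.cons_val_zero, Matrix.cons_val_one, Matrix.head_cons,
        Matrix.head_fin_const, Matrix.empty_val', Matrix.cons_val_fin_one, Matrix.of_apply,
        Fin.isValue, Fin.zero_eta, Fin.mk_one] <;>
      rw [hx11, hy11]
    · linear_combination (0:ℤ) * hdX2 + ((1:ℤ) * (X 0 1) * (Y 1 0) + (-3:ℤ) * (X 0 1) * (Y 0 0) + (1:ℤ) * (X 0 0) * (Y 0 0) + (1:ℤ) * k * (Y 0 0) + (-3:ℤ) * k * (X 0 1) + (3:ℤ) * k * (X 0 1) * (Y 0 1) + (-2:ℤ) * k * (X 0 1) * (Y 0 0) + (1:ℤ) * k * (X 0 0) + (-1:ℤ) * k * (X 0 0) * (Y 0 1) + (1:ℤ) * k^2 + (-1:ℤ) * k^2 * (Y 0 1) + (-3:ℤ) * k^2 * (X 0 1) + (3:ℤ) * k^2 * (X 0 1) * (Y 0 1))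 * hdY2 + (0:ℤ) * htZ
    · linear_combination (0:ℤ) * hdX2 + ((3:ℤ) * (X 0 1) * (Y 0 1) + (1:ℤ) * (X 0 1) * (Y 0 0) + (-1:ℤ) * (X 0 0) * (Y 0 1) + (-1:ℤ) * k * (Y 0 1) + (3:ℤ) * k * (X 0 1) * (Y 0 1)) * hdY2 + (0:ℤ) * htZ
    · linear_combination (0:ℤ) * hdX2 + ((-1:ℤ) * (X 1 0) * (Y 0 0) + (3:ℤ) * (X 0 1) * (Y 1 0) + (-9:ℤ) * (X 0 1) * (Y 0 0) + (1:ℤ) * (X 0 0) * (Y 1 0) + (3:ℤ) * k * (Y 0 0) + (-1:ℤ) * k * (X 1 0) + (-9:ℤ) * k * (X 0 1) + (1:ℤ) * k * (X 0 1) * (Y 1 0) + (9:ℤ) * k * (X 0 1) * (Y 0 1) + (-9:ℤ) * k * (X 0 1) * (Y 0 0) + (-3:ℤ) * k * (X 0 0) * (Y 0 1) + (-2:ℤ) * k * (X 0 0) * (Y 0 0) + (3:ℤ) * k^2 + (-3:ℤ) * k^2 * (Y 0 1) + (1:ℤ) * k^2 * (Y 0 0) + (-12:ℤ) * k^2 *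 (X 0 1) + (15:ℤ) * k^2 * (X 0 1) * (Y 0 1) + (-1:ℤ) * k^2 * (X 0 1) * (Y 0 0) + (-2:ℤ) * k^2 * (X 0 0) + (-2:ℤ) * k^2 * (X 0 0) * (Y 0 1) + (1:ℤ) * k^3 + (-2:ℤ) * k^3 * (Y 0 1) + (-3:ℤ) * k^3 * (X 0 1) + (6:ℤ) * k^3 * (X 0 1) * (Y 0 1)) * hdY2 + ((1:ℤ) * k) * htZ
    · linear_combination (0:ℤ) * hdX2 + ((1:ℤ) * (X 1 0) * (Y 0 1) + (9:ℤ) * (X 0 1) * (Y 0 1) + (3:ℤ) * (X 0 1) * (Y 0 0) + (1:ℤ) * (X 0 0) * (Y 0 0) + (-3:ℤ) * k * (Y 0 1) + (15:ℤ) * k * (X 0 1) * (Y 0 1) + (2:ℤ) * k * (X 0 1) * (Y 0 0) + (1:ℤ) * k * (X 0 0) * (Y 0 1) + (-2:ℤ) * k^2 * (Y 0 1) + (6:ℤ) * k^2 * (X 0 1) * (Y 0 1)) * hdY2 + (0:ℤ) * htZ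
  · ext i j
    fin_cases i <;> fin_cases j <;>
      simp only [psi, Smat, Tmat, Matrix.mul_apply, Matrix.sub_apply, Fin.sum_univ_two,
        Matrix.cons_val', Matrix.cons_val_zero, Matrix.cons_val_one, Matrix.head_cons,
        Matrix.head_fin_const, Matrix.empty_val', Matrix.cons_val_fin_one, Matrix.of_apply,
        Fin.isValue, Fin.zero_eta, Fin.mk_one] <;>
      rw [hx11, hy11]
    · linear_combination (0:ℤ) * hdX2 + (0:ℤ) * hdY2 + ((3:ℤ) * (Y 0 1) + (-1:ℤ) * (Y 0 0) + (-1:ℤ) * k + (3:ℤ) * k * (Y 0 1)) * htZ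
    · linear_combination (0:ℤ) * hdX2 + (0:ℤ) * hdY2 + ((1:ℤ) * (Y 0 1)) * htZ
    · linear_combination (0:ℤ) * hdX2 + ((-1:ℤ) * k^2) * hdY2 + ((1:ℤ) * (Y 1 0) + (9:ℤ) * (Y 0 1) + (-3:ℤ) * k + (15:ℤ) * k * (Y 0 1) + (1:ℤ) * k * (Y 0 0) + (-2:ℤ) * k^2 + (6:ℤ) * k^2 * (Y 0 1)) * htZ
    · linear_combination (0:ℤ) * hdX2 + (0:ℤ) * hdY2 + ((3:ℤ) * (Y 0 1) + (1:ℤ) * (Y 0 0) + (2:ℤ) * k * (Y 0 1)) * htZ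
end

section
/- Fix an integer k ≥ 0. Let (X,Y,Z) be a k-MM triple associated with (a,b,c). Then (X, Y·Z·Y⁻¹, Y) is a k-MM triple associated with (a, (3+3k)ab − c − kb − ka, b), and (Y, Y⁻¹·X·Y, Z) is a k-MM triple associated with (b, (3+3k)bc − a − kc − kb, c). (Here (3+3k)ab − c − kb − ka = (a² + kab + b²)/c and (3+3k)bc − a − kc − kb = (b² + kbc + c²)/a, i.e., the transformations of the (1,2)-entries are the Vieta jumpings of k-GM triples.) -/
open Matrix

lemma pos_aux (k a b c c' : ℤ) (hk : 0 ≤ k) (ha : 0 < a) (hb : 0 < b) (hc : 0 < c)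
    (h : c * c' = a ^ 2 + k * (a * b) + b ^ 2) : 0 < c' := by
  nlinarith [mul_pos ha hb, mul_nonneg hk (mul_pos ha hb).le, sq_nonneg (a - b)]

theorem stmt6 (k : ℤ) (hk : 0 ≤ k) (X Y Z : M2) (a b c : ℤ)
    (h : IsMMTriple k X Y Z) (ha : X 0 1 = a) (hb : Y 0 1 = b) (hc : Z 0 1 = c) :
    (IsMMTriple k X (Y * Z * Y⁻¹) Y ∧
      (Y * Z * Y⁻¹) 0 1 = (3 + 3 * k) * a * b - c - k * b - k * a) ∧
    (IsMMTriple k Y (Y⁻¹ * X * Y) Z ∧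
      (Y⁻¹ * X * Y) 0 1 = (3 + 3 * k) * b * c - a - k * c - k * b) := by
  subst ha hb hc
  obtain ⟨hX, hY, hZ, hprod, hGM⟩ := h
  obtain ⟨hXd, hXn, hXt⟩ := hX
  obtain ⟨hYd, hYn, hYt⟩ := hY
  obtain ⟨hZd, hZn, hZt⟩ := hZ
  obtain ⟨ha0, hb0, hc0, heq⟩ := hGM
  have hXu : IsUnit X.det := by rw [hXd]; exact isUnit_one
  have hYu : IsUnit Y.det := by rw [hYd]; exact isUnit_one
  have hZu : IsUnit Z.det := by rw [hZd]; exact isUnit_one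
  have hYiY : Y⁻¹ * Y = 1 := Matrix.nonsing_inv_mul Y hYu
  have hYYi : Y * Y⁻¹ = 1 := Matrix.mul_nonsing_inv Y hYu
  have hYinv : Y⁻¹ = !![Y 1 1, -(Y 0 1); -(Y 1 0), Y 0 0] := by
    rw [Matrix.inv_def, Matrix.adjugate_fin_two, hYd, Ring.inverse_one, one_smul]
  have hXinv : X⁻¹ = !![X 1 1, -(X 0 1); -(X 1 0), X 0 0] := by
    rw [Matrix.inv_def, Matrix.adjugate_fin_two, hXd, Ring.inverse_one, one_smul]
  have hZinv : Z⁻¹ = !![Z 1 1, -(Z 0 1); -(Z 1 0), Z 0 0] := by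
    rw [Matrix.inv_def, Matrix.adjugate_fin_two, hZd, Ring.inverse_one, one_smul]
  have hYZ : Y * Z = X⁻¹ * Tmat k := by
    have h1 : X⁻¹ * (X * Y * Z) = X⁻¹ * Tmat k := by rw [hprod]
    rwa [← Matrix.mul_assoc, ← Matrix.mul_assoc, Matrix.nonsing_inv_mul X hXu,
      Matrix.one_mul] at h1
  have hXY : X * Y = Tmat k * Z⁻¹ := by
    have h1 : X * Y * Z * Z⁻¹ = Tmat k * Z⁻¹ := by rw [hprod]
    rwa [Matrix.mul_assoc, Matrix.mul_nonsing_inv Z hZu, Matrix.mul_one] at h1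
  have hXd0 := hXd; have hYd0 := hYd; have hZd0 := hZd
  rw [Matrix.det_fin_two] at hXd hYd hZd
  rw [Matrix.trace_fin_two] at hXt hYt hZt
  have eA1 := congrFun (congrFun hYZ 0) 0
  have eB1 := congrFun (congrFun hYZ 0) 1
  have eD1 := congrFun (congrFun hYZ 1) 1
  have eA2 := congrFun (congrFun hXY 0) 0
  have eB2 := congrFun (congrFun hXY 0) 1
  have eD2 := congrFun (congrFun hXY 1) 1
  simp [hXinv, hZinv, Tmat, Matrix.mul_apply, Fin.sum_univ_two] at eA1 eB1 eD1 eA2 eB2 eD2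
  have hW01 : (Y * Z * Y⁻¹) 0 1
      = (3 + 3 * k) * X 0 1 * Y 0 1 - Z 0 1 - k * Y 0 1 - k * X 0 1 := by
    rw [hYinv]
    simp only [Matrix.mul_apply, Fin.sum_univ_two, Matrix.cons_val_zero, Matrix.cons_val_one,
      Matrix.head_cons, Matrix.head_fin_const, Matrix.cons_val', Matrix.empty_val',
      Matrix.cons_val_fin_one, Matrix.of_apply]
    linear_combination (-(Z 0 1)) * hYd + Y 0 1 * hXt + X 0 1 * hYt + (-(Y 0 1)) * eA1 +
      (Y 0 0 + Y 1 1) * eB1 + (-(Y 0 1)) * eD1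
  have hV01 : (Y⁻¹ * X * Y) 0 1
      = (3 + 3 * k) * Y 0 1 * Z 0 1 - X 0 1 - k * Z 0 1 - k * Y 0 1 := by
    rw [hYinv]
    simp only [Matrix.mul_apply, Fin.sum_univ_two, Matrix.cons_val_zero, Matrix.cons_val_one,
      Matrix.head_cons, Matrix.head_fin_const, Matrix.cons_val', Matrix.empty_val',
      Matrix.cons_val_fin_one, Matrix.of_apply]
    linear_combination (-(X 0 1)) * hYd + Z 0 1 * hYt + Y 0 1 * hZt + (-(Y 0 1)) * eA2 +
      (Y 0 0 + Y 1 1) * eB2 + (-(Y 0 1)) * eD2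
  have hGM1 : IsGMTriple k (X 0 1)
      ((3 + 3 * k) * X 0 1 * Y 0 1 - Z 0 1 - k * Y 0 1 - k * X 0 1) (Y 0 1) := by
    refine ⟨ha0, ?_, hb0, by linear_combination heq⟩
    refine pos_aux k (X 0 1) (Y 0 1) (Z 0 1) _ hk ha0 hb0 hc0 ?_
    linear_combination -heq
  have hGM2 : IsGMTriple k (Y 0 1)
      ((3 + 3 * k) * Y 0 1 * Z 0 1 - X 0 1 - k * Z 0 1 - k * Y 0 1) (Z 0 1) := by
    refine ⟨hb0, ?_, hc0, by linear_combination heq⟩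
    refine pos_aux k (Y 0 1) (Z 0 1) (X 0 1) _ hk hb0 hc0 ha0 ?_
    linear_combination -heq
  have hWd : (Y * Z * Y⁻¹).det = 1 := by
    rw [Matrix.det_mul, Matrix.det_mul, Matrix.det_nonsing_inv, hYd0, hZd0]; simp
  have hVd : (Y⁻¹ * X * Y).det = 1 := by
    rw [Matrix.det_mul, Matrix.det_mul, Matrix.det_nonsing_inv, hYd0, hXd0]; simp
  have hWt : (Y * Z * Y⁻¹).trace = -k := by
    rw [Matrix.trace_mul_cycle, hYiY, Matrix.one_mul, Matrix.trace_fin_two]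
    exact hZt
  have hVt : (Y⁻¹ * X * Y).trace = -k := by
    rw [Matrix.trace_mul_cycle, hYYi, Matrix.one_mul, Matrix.trace_fin_two]
    exact hXt
  have hWn : IsGMNumber k ((Y * Z * Y⁻¹) 0 1) := by
    rw [hW01]; exact ⟨_, _, _, hGM1, Or.inr (Or.inl rfl)⟩
  have hVn : IsGMNumber k ((Y⁻¹ * X * Y) 0 1) := by
    rw [hV01]; exact ⟨_, _, _, hGM2, Or.inr (Or.inl rfl)⟩
  have hXm : IsMMMatrix k X := ⟨hXd0, hXn, hXt ▸ Matrix.trace_fin_two X⟩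
  have hYm : IsMMMatrix k Y := ⟨hYd0, hYn, hYt ▸ Matrix.trace_fin_two Y⟩
  have hZm : IsMMMatrix k Z := ⟨hZd0, hZn, hZt ▸ Matrix.trace_fin_two Z⟩
  have hprod1 : X * (Y * Z * Y⁻¹) * Y = Tmat k := by
    simp only [Matrix.mul_assoc, hYiY, Matrix.mul_one]
    simp only [← Matrix.mul_assoc]; exact hprod
  have hprod2 : Y * (Y⁻¹ * X * Y) * Z = Tmat k := by
    simp only [← Matrix.mul_assoc, hYYi, Matrix.one_mul]; exact hprod
  refine ⟨⟨⟨hXm, ⟨hWd, hWn, hWt⟩, hYm, hprod1, ?_⟩, hW01⟩,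
    ⟨⟨hYm, ⟨hVd, hVn, hVt⟩, hZm, hprod2, ?_⟩, hV01⟩⟩
  · rw [hW01]; exact hGM1
  · rw [hV01]; exact hGM2
end

section
/- Fix an integer k ≥ 0. If (X,Y,Z) is an MM decomposition of a k-GC triple (P,Q,R), then (X, Z, Z⁻¹·Y·Z) is an MM decomposition of the k-GC triple (P, P·Q − S, Q), and (X·Y·X⁻¹, X, Z) is an MM decomposition of the k-GC triple (Q, Q·R − S, R). -/
open Matrix

/-- An MM decomposition of a triple `(P,Q,R)`: matrices `X, Y, Z ∈ SL(2,ℤ)` with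
`P = −Z⁻¹·Y⁻¹`, `Q = −Z⁻¹·X⁻¹`, `R = −Y⁻¹·X⁻¹` and equal traces. -/
def IsMMDecomp (X Y Z P Q R : M2) : Prop :=
  X.det = 1 ∧ Y.det = 1 ∧ Z.det = 1 ∧
    P = -(Z⁻¹ * Y⁻¹) ∧ Q = -(Z⁻¹ * X⁻¹) ∧ R = -(Y⁻¹ * X⁻¹) ∧
    X.trace = Y.trace ∧ Y.trace = Z.trace

private lemma stmt7_cayley (A : M2) (h : A.det = 1) : A + A⁻¹ = A.trace • (1 : M2) := by
  rw [Matrix.inv_def, h, Matrix.adjugate_fin_two, Matrix.trace_fin_two]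
  ext i j
  fin_cases i <;> fin_cases j <;> simp [Matrix.one_apply] <;> ring

theorem stmt7 (k : ℤ) (hk : 0 ≤ k) (P Q R X Y Z : M2)
    (hGC : IsGCTriple k P Q R) (hdec : IsMMDecomp X Y Z P Q R) :
    IsMMDecomp X Z (Z⁻¹ * Y * Z) P (P * Q - Smat k) Q ∧
    IsMMDecomp (X * Y * X⁻¹) X Z Q (Q * R - Smat k) R := by
  obtain ⟨dX, dY, dZ, hP, hQ, hR, tXY, tYZ⟩ := hdec
  have hQS : Q = P * R - Smat k := hGC.2.2.2.1
  have uX : IsUnit X.det := dX ▸ isUnit_one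
  have uY : IsUnit Y.det := dY ▸ isUnit_one
  have uZ : IsUnit Z.det := dZ ▸ isUnit_one
  have hX1 : X * X⁻¹ = 1 := Matrix.mul_nonsing_inv X uX
  have hY2 : Y⁻¹ * Y = 1 := Matrix.nonsing_inv_mul Y uY
  have hZ1 : Z * Z⁻¹ = 1 := Matrix.mul_nonsing_inv Z uZ
  have hZinv : Z⁻¹⁻¹ = Z := Matrix.nonsing_inv_nonsing_inv Z uZ
  have hXinv : X⁻¹⁻¹ = X := Matrix.nonsing_inv_nonsing_inv X uX
  have hinv1 : (Z⁻¹ * Y * Z)⁻¹ = Z⁻¹ * Y⁻¹ * Z := by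
    rw [Matrix.mul_inv_rev, Matrix.mul_inv_rev, hZinv]; noncomm_ring
  have hinv2 : (X * Y * X⁻¹)⁻¹ = X * Y⁻¹ * X⁻¹ := by
    rw [Matrix.mul_inv_rev, Matrix.mul_inv_rev, hXinv]; noncomm_ring
  have hS : Smat k = Z⁻¹ * Y⁻¹ * (Y.trace • (1:M2)) * X⁻¹ := by
    have h0 : Smat k = P * R - Q := by rw [hQS]; noncomm_ring
    rw [h0, hP, hQ, hR, ← stmt7_cayley Y dY]
    calc -(Z⁻¹ * Y⁻¹) * -(Y⁻¹ * X⁻¹) - -(Z⁻¹ * X⁻¹)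
        = Z⁻¹ * Y⁻¹ * (Y⁻¹ * X⁻¹) + Z⁻¹ * (Y⁻¹ * Y) * X⁻¹ := by rw [hY2]; noncomm_ring
      _ = Z⁻¹ * Y⁻¹ * (Y + Y⁻¹) * X⁻¹ := by noncomm_ring
  have key1 : P * Q - Smat k = -((Z⁻¹ * Y * Z)⁻¹ * X⁻¹) := by
    have hZn : Z⁻¹ = Z.trace • (1:M2) - Z := eq_sub_of_add_eq' (stmt7_cayley Z dZ)
    rw [hinv1, hP, hQ, hS, tYZ]
    nth_rewrite 2 [hZn]
    noncomm_ring
    module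
  have key2 : Q * R - Smat k = -(Z⁻¹ * (X * Y * X⁻¹)⁻¹) := by
    have hXn : X⁻¹ = X.trace • (1:M2) - X := eq_sub_of_add_eq' (stmt7_cayley X dX)
    rw [hinv2, hQ, hR, hS, ← tXY]
    nth_rewrite 1 [hXn]
    noncomm_ring
  have dconjY : (Z⁻¹ * Y * Z).det = 1 := by
    simp [Matrix.det_mul, Matrix.det_nonsing_inv, dY, dZ]
  have dconjX : (X * Y * X⁻¹).det = 1 := by
    simp [Matrix.det_mul, Matrix.det_nonsing_inv, dY, dX]
  have tconjY : (Z⁻¹ * Y * Z).trace = Y.trace := by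
    rw [mul_assoc, Matrix.trace_mul_comm, mul_assoc, hZ1, mul_one]
  have tconjX : (X * Y * X⁻¹).trace = Y.trace := by
    rw [Matrix.trace_mul_comm, ← mul_assoc, Matrix.nonsing_inv_mul X uX, one_mul]
  refine ⟨⟨dX, dZ, dconjY, ?_, key1, hQ, tXY.trans tYZ, by rw [tconjY, tYZ]⟩,
          ⟨dconjX, dX, dZ, hQ, key2, ?_, by rw [tconjX, tXY], tXY.trans tYZ⟩⟩
  · rw [hinv1, hP, mul_assoc, hZ1, mul_one]
  · rw [hinv2, hR]
    rw [show X⁻¹ * (X * Y⁻¹ * X⁻¹) = Y⁻¹ * X⁻¹ by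
      rw [← mul_assoc, ← mul_assoc, Matrix.nonsing_inv_mul X uX, one_mul]]
end

section
/- Fix an integer k ≥ 0. If (X,Y,Z) is an MM decomposition of a k-GC triple (P,Q,R), then (X, Y·Z·Y⁻¹, Y) is an MM decomposition of the k-GC triple (P, R, P⁻¹·(R + S)), and (Y, Y⁻¹·X·Y, Z) is an MM decomposition of the k-GC triple ((P + S)·R⁻¹, P, R). -/
open Matrix

lemma inv_mul_self' (A : M2) (h : A.det = 1) : A⁻¹ * A = 1 :=
  Matrix.nonsing_inv_mul A (by simp [h])

lemma mul_inv_self' (A : M2) (h : A.det = 1) : A * A⁻¹ = 1 :=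
  Matrix.mul_nonsing_inv A (by simp [h])

lemma inv_eq_trace_smul_sub (A : M2) (h : A.det = 1) :
    A⁻¹ = A.trace • (1 : M2) - A := by
  have h1 : A⁻¹ = A.adjugate := by rw [Matrix.inv_def, h]; simp
  rw [h1, Matrix.adjugate_fin_two]
  ext i j
  fin_cases i <;> fin_cases j <;>
    simp only [Matrix.sub_apply, Matrix.smul_apply, Matrix.one_apply, Matrix.trace_fin_two,
      Matrix.cons_val', Matrix.cons_val_zero, Matrix.cons_val_one, Matrix.head_cons,
      Matrix.head_fin_const, Matrix.empty_val', Matrix.cons_val_fin_one, smul_eq_mul] <;>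
    norm_num
theorem stmt8 (k : ℤ) (hk : 0 ≤ k) (P Q R X Y Z : M2)
    (hGC : IsGCTriple k P Q R) (hdec : IsMMDecomp X Y Z P Q R) :
    IsMMDecomp X (Y * Z * Y⁻¹) Y P R (P⁻¹ * (R + Smat k)) ∧
    IsMMDecomp Y (Y⁻¹ * X * Y) Z ((P + Smat k) * R⁻¹) P R := by
  obtain ⟨-, -, -, hQPR, -⟩ := hGC
  obtain ⟨hdX, hdY, hdZ, hP, hQ, hR, htXY, htYZ⟩ := hdec
  have hyY := inv_mul_self' Y hdY
  have hYy := mul_inv_self' Y hdY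
  have hzZ := inv_mul_self' Z hdZ
  have hZz := mul_inv_self' Z hdZ
  have hxX := inv_mul_self' X hdX
  have hXx := mul_inv_self' X hdX
  have hZC : Z⁻¹ = X.trace • (1 : M2) - Z := by
    rw [inv_eq_trace_smul_sub Z hdZ, ← htYZ, ← htXY]
  have hXC : X⁻¹ = X.trace • (1 : M2) - X := inv_eq_trace_smul_sub X hdX
  have hYadd : Y⁻¹ + Y = X.trace • (1 : M2) := by
    rw [inv_eq_trace_smul_sub Y hdY, ← htXY]; abel
  have hS : Smat k = P * R - Q := by rw [hQPR, sub_sub_cancel]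
  have hPinv : P⁻¹ = -(Y * Z) := by
    apply Matrix.inv_eq_right_inv
    rw [hP]
    calc -(Z⁻¹ * Y⁻¹) * -(Y * Z) = Z⁻¹ * ((Y⁻¹ * Y) * Z) := by noncomm_ring
    _ = 1 := by rw [hyY, one_mul, hzZ]
  have hRinv : R⁻¹ = -(X * Y) := by
    apply Matrix.inv_eq_right_inv
    rw [hR]
    calc -(Y⁻¹ * X⁻¹) * -(X * Y) = Y⁻¹ * ((X⁻¹ * X) * Y) := by noncomm_ring
    _ = 1 := by rw [hxX, one_mul, hyY]
  have hWinv : (Y * Z * Y⁻¹)⁻¹ = Y * Z⁻¹ * Y⁻¹ := by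
    apply Matrix.inv_eq_right_inv
    calc (Y * Z * Y⁻¹) * (Y * Z⁻¹ * Y⁻¹)
        = Y * (Z * ((Y⁻¹ * Y) * (Z⁻¹ * Y⁻¹))) := by noncomm_ring
    _ = 1 := by rw [hyY, one_mul, ← mul_assoc Z, hZz, one_mul, hYy]
  have hVinv : (Y⁻¹ * X * Y)⁻¹ = Y⁻¹ * X⁻¹ * Y := by
    apply Matrix.inv_eq_right_inv
    calc (Y⁻¹ * X * Y) * (Y⁻¹ * X⁻¹ * Y)
        = Y⁻¹ * (X * ((Y * Y⁻¹) * (X⁻¹ * Y))) := by noncomm_ring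
    _ = 1 := by rw [hYy, one_mul, ← mul_assoc X, hXx, one_mul, hyY]
  have hdW : (Y * Z * Y⁻¹).det = 1 := by
    simp [Matrix.det_mul, hdY, hdZ, Matrix.det_nonsing_inv]
  have hdV : (Y⁻¹ * X * Y).det = 1 := by
    simp [Matrix.det_mul, hdY, hdX, Matrix.det_nonsing_inv]
  have htW : (Y * Z * Y⁻¹).trace = Z.trace := by
    rw [Matrix.trace_mul_cycle, hyY, one_mul]
  have htV : (Y⁻¹ * X * Y).trace = X.trace := by
    rw [Matrix.trace_mul_cycle, hYy, one_mul]
  refine ⟨⟨hdX, hdW, hdY, ?_, hR, ?_, ?_, ?_⟩, ⟨hdY, hdV, hdZ, ?_, hP, ?_, ?_, ?_⟩⟩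
  · -- P = -(Y⁻¹ * (Y*Z*Y⁻¹)⁻¹)
    rw [hWinv, hP]
    congr 1
    symm
    calc Y⁻¹ * (Y * Z⁻¹ * Y⁻¹) = (Y⁻¹ * Y) * (Z⁻¹ * Y⁻¹) := by noncomm_ring
    _ = Z⁻¹ * Y⁻¹ := by rw [hyY, one_mul]
  · -- P⁻¹ * (R + Smat k) = -((Y*Z*Y⁻¹)⁻¹ * X⁻¹)
    rw [hWinv, hPinv, hS, hP, hQ, hR]
    calc -(Y * Z) * (-(Y⁻¹ * X⁻¹) + (-(Z⁻¹ * Y⁻¹) * -(Y⁻¹ * X⁻¹) - -(Z⁻¹ * X⁻¹)))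
        = Y * Z * (Y⁻¹ * X⁻¹) - Y * ((Z * Z⁻¹) * (Y⁻¹ * (Y⁻¹ * X⁻¹)))
          - Y * ((Z * Z⁻¹) * X⁻¹) := by noncomm_ring
    _ = Y * Z * (Y⁻¹ * X⁻¹) - (Y * Y⁻¹) * (Y⁻¹ * X⁻¹) - Y * X⁻¹ := by
        rw [hZz]; simp only [one_mul]; noncomm_ring
    _ = Y * Z * (Y⁻¹ * X⁻¹) - (Y⁻¹ + Y) * X⁻¹ := by
        rw [hYy]; simp only [one_mul]; noncomm_ring
    _ = Y * Z * (Y⁻¹ * X⁻¹) - (X.trace • (1 : M2)) * X⁻¹ := by rw [hYadd]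
    _ = -(Y * Z⁻¹ * Y⁻¹ * X⁻¹) := by
        rw [hZC]
        have h1 : Y * (X.trace • (1 : M2) - Z) * Y⁻¹ * X⁻¹
            = X.trace • ((Y * Y⁻¹) * X⁻¹) - Y * Z * (Y⁻¹ * X⁻¹) := by noncomm_ring
        rw [h1, hYy]
        noncomm_ring
  · -- X.trace = (Y*Z*Y⁻¹).trace
    rw [htW]; exact htXY.trans htYZ
  · rw [htW]; exact htYZ.symm
  · -- (P + Smat k) * R⁻¹ = -(Z⁻¹ * (Y⁻¹*X*Y)⁻¹)
    rw [hVinv, hRinv, hS, hP, hQ, hR]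
    calc (-(Z⁻¹ * Y⁻¹) + (-(Z⁻¹ * Y⁻¹) * -(Y⁻¹ * X⁻¹) - -(Z⁻¹ * X⁻¹))) * -(X * Y)
        = Z⁻¹ * (Y⁻¹ * (X * Y)) - Z⁻¹ * (Y⁻¹ * (Y⁻¹ * ((X⁻¹ * X) * Y)))
          - Z⁻¹ * ((X⁻¹ * X) * Y) := by noncomm_ring
    _ = Z⁻¹ * (Y⁻¹ * (X * Y)) - Z⁻¹ * (Y⁻¹ * (Y⁻¹ * Y)) - Z⁻¹ * Y := by
        rw [hxX]; simp only [one_mul]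
    _ = Z⁻¹ * (Y⁻¹ * (X * Y)) - Z⁻¹ * (Y⁻¹ + Y) := by
        rw [hyY]; simp only [mul_one]; noncomm_ring
    _ = Z⁻¹ * (Y⁻¹ * (X * Y)) - Z⁻¹ * (X.trace • (1 : M2)) := by rw [hYadd]
    _ = -(Z⁻¹ * (Y⁻¹ * X⁻¹ * Y)) := by
        rw [hXC]
        have h1 : Z⁻¹ * (Y⁻¹ * (X.trace • (1 : M2) - X) * Y)
            = X.trace • (Z⁻¹ * (Y⁻¹ * Y)) - Z⁻¹ * (Y⁻¹ * (X * Y)) := by noncomm_ring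
        rw [h1, hyY]
        noncomm_ring
  · -- R = -((Y⁻¹*X*Y)⁻¹ * Y⁻¹)
    rw [hVinv, hR]
    congr 1
    symm
    calc Y⁻¹ * X⁻¹ * Y * Y⁻¹ = Y⁻¹ * (X⁻¹ * (Y * Y⁻¹)) := by noncomm_ring
    _ = Y⁻¹ * X⁻¹ := by rw [hYy, mul_one]
  · rw [htV]; exact htXY.symm
  · rw [htV]; exact htXY.trans htYZ
end

section
/- Fix an integer k ≥ 0. Let (P,Q,R) be a k-GC triple whose triple of (1,2)-entries (a,b,c) satisfies b > a and b > c. Then there exists an MM decomposition (X,Y,Z) of (P,Q,R), and it is unique up to sign: if (X₁,Y₁,Z₁) and (X₂,Y₂,Z₂) are both MM decompositions of (P,Q,R), then (X₂,Y₂,Z₂) = (X₁,Y₁,Z₁) or (X₂,Y₂,Z₂) = (−X₁,−Y₁,−Z₁). -/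
open Matrix

lemma aux_inv_eq_adj (A : M2) (h : A.det = 1) : A⁻¹ = A.adjugate := by
  rw [Matrix.inv_def, h]; simp

lemma aux_mul_adj (A : M2) (h : A.det = 1) : A * A.adjugate = 1 := by
  rw [Matrix.mul_adjugate, h, one_smul]

lemma aux_adj_mul (A : M2) (h : A.det = 1) : A.adjugate * A = 1 := by
  rw [Matrix.adjugate_mul, h, one_smul]

lemma aux_adj_adj (A : M2) : A.adjugate.adjugate = A := by
  rw [Matrix.adjugate_fin_two A, Matrix.adjugate_fin_two]
  ext i j
  fin_cases i <;> fin_cases j <;> simp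

lemma aux_adj_neg (A : M2) : (-A).adjugate = -A.adjugate := by
  rw [Matrix.adjugate_fin_two A, Matrix.adjugate_fin_two (-A)]
  ext i j
  fin_cases i <;> fin_cases j <;> simp

lemma aux_trace_adj (A : M2) : A.adjugate.trace = A.trace := by
  rw [Matrix.adjugate_fin_two A]
  simp [Matrix.trace_fin_two]
  ring

lemma aux_det_neg (A : M2) : (-A).det = A.det := by
  rw [Matrix.det_neg]; simp

lemma aux_det_adj (A : M2) : A.adjugate.det = A.det := by
  rw [Matrix.det_adjugate]; simp

lemma aux_CH (A : M2) : A * A = A.trace • A - A.det • 1 := by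
  ext i j
  simp only [Matrix.sub_apply, Matrix.smul_apply, smul_eq_mul, Matrix.mul_apply,
    Fin.sum_univ_two, Matrix.trace_fin_two, Matrix.det_fin_two, Matrix.one_apply]
  fin_cases i <;> fin_cases j <;> simp <;> ring

lemma aux_ext (A B : M2) (h00 : A 0 0 = B 0 0) (h01 : A 0 1 = B 0 1)
    (h10 : A 1 0 = B 1 0) (h11 : A 1 1 = B 1 1) : A = B := by
  ext i j
  fin_cases i <;> fin_cases j <;> assumption

lemma aux_unique0 (p00 p01 p10 p11 q00 q01 q10 q11 : ℤ)
    (z00 z01 z10 z11 w00 w01 w10 w11 : ℤ)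
    (hdP : p00 * p11 - p01 * p10 = 1) (htP : p00 + p11 = 3 * p01)
    (hdQ : q00 * q11 - q01 * q10 = 1) (htQ : q00 + q11 = 3 * q01)
    (hapos : 0 < p01) (hba : p01 < q01)
    (t1 : z00 + z11 = 0) (t2 : z00 * p00 + z01 * p10 + z10 * p01 + z11 * p11 = 0)
    (t3 : z00 * q00 + z01 * q10 + z10 * q01 + z11 * q11 = 0)
    (s1 : w00 + w11 = 0) (s2 : w00 * p00 + w01 * p10 + w10 * p01 + w11 * p11 = 0)
    (s3 : w00 * q00 + w01 * q10 + w10 * q01 + w11 * q11 = 0)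
    (hdZ : z00 * z11 - z01 * z10 = 1) (hdW : w00 * w11 - w01 * w10 = 1) :
    (z00 = w00 ∧ z01 = w01 ∧ z10 = w10 ∧ z11 = w11) ∨
    (z00 = -w00 ∧ z01 = -w01 ∧ z10 = -w10 ∧ z11 = -w11) := by
  have hu1 : z00 * (p00 - p11) + z01 * p10 + z10 * p01 = 0 := by
    linear_combination t2 - p11 * t1
  have hu2 : z00 * (q00 - q11) + z01 * q10 + z10 * q01 = 0 := by
    linear_combination t3 - q11 * t1
  have hw1 : w00 * (p00 - p11) + w01 * p10 + w10 * p01 = 0 := by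
    linear_combination s2 - p11 * s1
  have hw2 : w00 * (q00 - q11) + w01 * q10 + w10 * q01 = 0 := by
    linear_combination s3 - q11 * s1
  obtain ⟨v1, hv1⟩ : ∃ v : ℤ, v = p10 * q01 - p01 * q10 := ⟨_, rfl⟩
  obtain ⟨v2, hv2⟩ : ∃ v : ℤ, v = p01 * (q00 - q11) - (p00 - p11) * q01 := ⟨_, rfl⟩
  obtain ⟨v3, hv3⟩ : ∃ v : ℤ, v = (p00 - p11) * q10 - p10 * (q00 - q11) := ⟨_, rfl⟩
  have cu1 : z01 * v3 - z10 * v2 = 0 := by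
    rw [hv2, hv3]; linear_combination (p00 - p11) * hu2 - (q00 - q11) * hu1
  have cu2 : z10 * v1 - z00 * v3 = 0 := by
    rw [hv1, hv3]; linear_combination p10 * hu2 - q10 * hu1
  have cu3 : z00 * v2 - z01 * v1 = 0 := by
    rw [hv1, hv2]; linear_combination p01 * hu2 - q01 * hu1
  have cw1 : w01 * v3 - w10 * v2 = 0 := by
    rw [hv2, hv3]; linear_combination (p00 - p11) * hw2 - (q00 - q11) * hw1
  have cw2 : w10 * v1 - w00 * v3 = 0 := by
    rw [hv1, hv3]; linear_combination p10 * hw2 - q10 * hw1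
  have cw3 : w00 * v2 - w01 * v1 = 0 := by
    rw [hv1, hv2]; linear_combination p01 * hw2 - q01 * hw1
  have hdetu : -z00 ^ 2 - z01 * z10 = 1 := by linear_combination hdZ - z00 * t1
  have hdetw : -w00 ^ 2 - w01 * w10 = 1 := by linear_combination hdW - w00 * s1
  obtain ⟨g, hg⟩ : ∃ gg : ℤ, gg = -v1 ^ 2 - v2 * v3 := ⟨_, rfl⟩
  have hvne : ¬(v1 = 0 ∧ v2 = 0) := by
    rintro ⟨h1, h2⟩
    rw [hv1] at h1
    rw [hv2] at h2
    have hb2 : 4 * q01 ^ 2 = 4 * p01 ^ 2 := by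
      linear_combination q01 ^ 2 * (p00 + p11 + 3 * p01) * htP - 4 * q01 ^ 2 * hdP
        - p01 ^ 2 * (q00 + q11 + 3 * q01) * htQ + 4 * p01 ^ 2 * hdQ
        + (q01 * (p00 - p11) + p01 * (q00 - q11)) * h2 - 4 * p01 * q01 * h1
    nlinarith [hapos, hba, hb2]
  rcases not_and_or.mp hvne with hv1ne | hv2ne
  · have m2u : v1 * z01 = z00 * v2 := by linear_combination -cu3
    have m3u : v1 * z10 = z00 * v3 := by linear_combination cu2
    have m2w : v1 * w01 = w00 * v2 := by linear_combination -cw3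
    have m3w : v1 * w10 = w00 * v3 := by linear_combination cw2
    have e_u : z00 ^ 2 * g = v1 ^ 2 := by
      rw [hg]; linear_combination v1 ^ 2 * hdetu + (v1 * z10) * m2u + (z00 * v2) * m3u
    have e_w : w00 ^ 2 * g = v1 ^ 2 := by
      rw [hg]; linear_combination v1 ^ 2 * hdetw + (v1 * w10) * m2w + (w00 * v2) * m3w
    have hgne : g ≠ 0 := by
      intro h0
      apply hv1ne
      have h1 : v1 ^ 2 = 0 := by rw [h0, mul_zero] at e_u; linarith
      exact sq_eq_zero_iff.mp h1
    have hsq : z00 ^ 2 = w00 ^ 2 := mul_right_cancel₀ hgne (by rw [e_u, e_w])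
    have hcase : (z00 - w00) * (z00 + w00) = 0 := by linear_combination hsq
    rcases mul_eq_zero.mp hcase with h | h
    · left
      have h00 : z00 = w00 := by linarith
      have h01 : z01 = w01 := mul_left_cancel₀ hv1ne (by rw [m2u, h00, ← m2w])
      have h10 : z10 = w10 := mul_left_cancel₀ hv1ne (by rw [m3u, h00, ← m3w])
      exact ⟨h00, h01, h10, by linarith⟩
    · right
      have h00 : z00 = -w00 := by linarith
      have h01 : z01 = -w01 := mul_left_cancel₀ hv1ne
        (by rw [h00] at m2u; linear_combination m2u + m2w)
      have h10 : z10 = -w10 := mul_left_cancel₀ hv1ne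
        (by rw [h00] at m3u; linear_combination m3u + m3w)
      exact ⟨h00, h01, h10, by linarith⟩
  · have n1u : v2 * z00 = z01 * v1 := by linear_combination cu3
    have n3u : v2 * z10 = z01 * v3 := by linear_combination -cu1
    have n1w : v2 * w00 = w01 * v1 := by linear_combination cw3
    have n3w : v2 * w10 = w01 * v3 := by linear_combination -cw1
    have e_u : z01 ^ 2 * g = v2 ^ 2 := by
      rw [hg]
      linear_combination v2 ^ 2 * hdetu + (v2 * z00 + z01 * v1) * n1u + (z01 * v2) * n3u
    have e_w : w01 ^ 2 * g = v2 ^ 2 := by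
      rw [hg]
      linear_combination v2 ^ 2 * hdetw + (v2 * w00 + w01 * v1) * n1w + (w01 * v2) * n3w
    have hgne : g ≠ 0 := by
      intro h0
      apply hv2ne
      have h1 : v2 ^ 2 = 0 := by rw [h0, mul_zero] at e_u; linarith
      exact sq_eq_zero_iff.mp h1
    have hsq : z01 ^ 2 = w01 ^ 2 := mul_right_cancel₀ hgne (by rw [e_u, e_w])
    have hcase : (z01 - w01) * (z01 + w01) = 0 := by linear_combination hsq
    rcases mul_eq_zero.mp hcase with h | h
    · left
      have h01 : z01 = w01 := by linarith
      have h00 : z00 = w00 := mul_left_cancel₀ hv2ne (by rw [n1u, h01, ← n1w])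
      have h10 : z10 = w10 := mul_left_cancel₀ hv2ne (by rw [n3u, h01, ← n3w])
      exact ⟨h00, h01, h10, by linarith⟩
    · right
      have h01 : z01 = -w01 := by linarith
      have h00 : z00 = -w00 := mul_left_cancel₀ hv2ne
        (by rw [h01] at n1u; linear_combination n1u + n1w)
      have h10 : z10 = -w10 := mul_left_cancel₀ hv2ne
        (by rw [h01] at n3u; linear_combination n3u + n3w)
      exact ⟨h00, h01, h10, by linarith⟩


set_option maxHeartbeats 2000000 in
theorem stmt9_aux (k : ℤ) (hk : 0 ≤ k) (P Q R : M2) (hGC : IsGCTriple k P Q R)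
    (hba : P 0 1 < Q 0 1) (hbc : R 0 1 < Q 0 1) :
    (∃ X Y Z : M2, IsMMDecomp X Y Z P Q R) ∧
    (∀ X₁ Y₁ Z₁ X₂ Y₂ Z₂ : M2,
      IsMMDecomp X₁ Y₁ Z₁ P Q R → IsMMDecomp X₂ Y₂ Z₂ P Q R →
      (X₂ = X₁ ∧ Y₂ = Y₁ ∧ Z₂ = Z₁) ∨ (X₂ = -X₁ ∧ Y₂ = -Y₁ ∧ Z₂ = -Z₁)) := by
  obtain ⟨⟨hdP, hgmP, htP⟩, ⟨hdQ, hgmQ, htQ⟩, ⟨hdR, hgmR, htR⟩, hQeq, hMk⟩ := hGC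
  set U : M2 := !![1, 0; -(3*k+3), 1] with hUdef
  have hdU : U.det = 1 := by rw [hUdef]; simp [Matrix.det_fin_two_of]
  have hPR : P * R = Q + Smat k := by rw [hQeq, sub_add_cancel]
  have hUS : U * Smat k = k • (1 : M2) := by
    ext i j
    simp only [hUdef, Smat, Matrix.mul_apply, Fin.sum_univ_two, Matrix.smul_apply,
      smul_eq_mul, Matrix.one_apply]
    fin_cases i <;> fin_cases j <;> simp <;> ring
  have htU_l : ∀ A : M2, (U * A).trace = A.trace - (3*k+3) * A 0 1 := by
    intro A
    rw [hUdef, Matrix.trace_fin_two, Matrix.trace_fin_two]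
    simp [Matrix.mul_apply, Fin.sum_univ_two]
    ring
  have htU_r : ∀ A : M2, (A * U).trace = A.trace - (3*k+3) * A 0 1 := by
    intro A
    rw [hUdef, Matrix.trace_fin_two, Matrix.trace_fin_two]
    simp [Matrix.mul_apply, Fin.sum_univ_two]
    ring
  set Z₀ : M2 := R * U with hZ0def
  have hdZ0 : Z₀.det = 1 := by rw [hZ0def, Matrix.det_mul, hdR, hdU, mul_one]
  have htZ0 : Z₀.trace = -k := by rw [hZ0def, htU_r R, htR]; ring
  have htUPR : (U * (P * R)).trace = k := by
    rw [hPR, mul_add, Matrix.trace_add, hUS, htU_l Q, htQ, Matrix.trace_smul,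
      Matrix.trace_one]
    simp only [smul_eq_mul]
    norm_num
    ring
  have htM0 : (Z₀ * P).trace = k := by
    have h1 : Z₀ * P = R * (U * P) := by rw [hZ0def]; noncomm_ring
    rw [h1, Matrix.trace_mul_comm, mul_assoc]
    exact htUPR
  have htZ0Q : (Z₀ * Q).trace = k := by
    have h1 : Z₀ * Q = R * ((U * P) * R) - k • R := by
      have h2 : R * U * (P * R - Smat k) = R * ((U * P) * R) - R * (U * Smat k) := by
        noncomm_ring
      rw [hZ0def, hQeq, h2, hUS, mul_smul_comm, mul_one]
    have h3 : (R * ((U * P) * R)).trace = ((U * P) * (R * R)).trace := by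
      rw [Matrix.trace_mul_comm]
      congr 1
      rw [mul_assoc]
    have hRR : R * R = R.trace • R - 1 := by rw [aux_CH R, hdR, one_smul]
    have e1 : ((U * P) * R).trace = k := by rw [mul_assoc]; exact htUPR
    have e2 : (U * P).trace = -k := by rw [htU_l, htP]; ring
    rw [h1, Matrix.trace_sub, Matrix.trace_smul, h3, hRR, mul_sub, mul_one,
      mul_smul_comm, Matrix.trace_sub, Matrix.trace_smul, e1, e2, htR]
    simp only [smul_eq_mul]
    ring
  have hWW : (U * Q) * (U * Q) = (-k) • (U * Q) - 1 := by
    have hdUQ : (U * Q).det = 1 := by rw [Matrix.det_mul, hdU, hdQ, mul_one]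
    have htUQ : (U * Q).trace = -k := by rw [htU_l, htQ]; ring
    rw [aux_CH (U * Q), hdUQ, one_smul, htUQ]
  have hZPZQ : Z₀ * P * (Z₀ * Q) = -R := by
    have h1 : Z₀ * P * (Z₀ * Q) = R * ((U * (P * R)) * (U * Q)) := by
      rw [hZ0def]; noncomm_ring
    have h2 : (U * Q + k • (1 : M2)) * (U * Q) = (U * Q) * (U * Q) + k • (U * Q) := by
      rw [add_mul, smul_mul_assoc, one_mul]
    have h3 : (-k) • (U * Q) - 1 + k • (U * Q) = (-1 : M2) := by
      rw [neg_smul]; abel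
    rw [h1, hPR, mul_add, hUS, h2, hWW, h3, mul_neg, mul_one]
  set M₀ : M2 := Z₀ * P with hM0def
  set Y₀ : M2 := -(M₀.adjugate) with hY0def
  set X₀ : M2 := -((Z₀ * Q).adjugate) with hX0def
  have hdM0 : M₀.det = 1 := by rw [hM0def, Matrix.det_mul, hdZ0, hdP, mul_one]
  have hdZ0Q : (Z₀ * Q).det = 1 := by rw [Matrix.det_mul, hdZ0, hdQ, mul_one]
  have hdY0 : Y₀.det = 1 := by rw [hY0def, aux_det_neg, aux_det_adj, hdM0]
  have hdX0 : X₀.det = 1 := by rw [hX0def, aux_det_neg, aux_det_adj, hdZ0Q]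
  have hY0inv : Y₀⁻¹ = -M₀ := by
    rw [aux_inv_eq_adj _ hdY0, hY0def, aux_adj_neg, aux_adj_adj]
  have hX0inv : X₀⁻¹ = -(Z₀ * Q) := by
    rw [aux_inv_eq_adj _ hdX0, hX0def, aux_adj_neg, aux_adj_adj]
  have hdecomp0 : IsMMDecomp X₀ Y₀ Z₀ P Q R := by
    refine ⟨hdX0, hdY0, hdZ0, ?_, ?_, ?_, ?_, ?_⟩
    · rw [aux_inv_eq_adj _ hdZ0, hY0inv, mul_neg, neg_neg, hM0def, ← mul_assoc,
        aux_adj_mul _ hdZ0, one_mul]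
    · rw [aux_inv_eq_adj _ hdZ0, hX0inv, mul_neg, neg_neg, ← mul_assoc,
        aux_adj_mul _ hdZ0, one_mul]
    · rw [hY0inv, hX0inv, neg_mul_neg, hM0def, hZPZQ, neg_neg]
    · rw [hX0def, hY0def, Matrix.trace_neg, Matrix.trace_neg, aux_trace_adj,
        aux_trace_adj, hM0def, htZ0Q, htM0]
    · rw [hY0def, Matrix.trace_neg, aux_trace_adj, hM0def, htM0, htZ0]
  have hQadj : Q * Q.adjugate = 1 := aux_mul_adj Q hdQ
  have hPadj : P * P.adjugate = 1 := aux_mul_adj P hdP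
  obtain ⟨hapos, hbpos, hcpos, hMkeq⟩ := hMk
  have huniq : ∀ X Y Z : M2, IsMMDecomp X Y Z P Q R →
      (X = X₀ ∧ Y = Y₀ ∧ Z = Z₀) ∨ (X = -X₀ ∧ Y = -Y₀ ∧ Z = -Z₀) := by
    rintro X Y Z ⟨hdX, hdY, hdZ, hPe, hQe, hRe, htXY, htYZ⟩
    rw [aux_inv_eq_adj _ hdZ, aux_inv_eq_adj _ hdY] at hPe
    rw [aux_inv_eq_adj _ hdZ, aux_inv_eq_adj _ hdX] at hQe
    rw [aux_inv_eq_adj _ hdY, aux_inv_eq_adj _ hdX] at hRe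
    have hZP : Z * P = -(Y.adjugate) := by
      rw [hPe, mul_neg, ← mul_assoc, aux_mul_adj _ hdZ, one_mul]
    have hadjY : Y.adjugate = -(Z * P) := by rw [hZP, neg_neg]
    have hZQ : Z * Q = -(X.adjugate) := by
      rw [hQe, mul_neg, ← mul_assoc, aux_mul_adj _ hdZ, one_mul]
    have hadjX : X.adjugate = -(Z * Q) := by rw [hZQ, neg_neg]
    have hY : Y = -((Z * P).adjugate) := by
      conv_lhs => rw [← aux_adj_adj Y]
      rw [hadjY, aux_adj_neg]
    have hX : X = -((Z * Q).adjugate) := by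
      conv_lhs => rw [← aux_adj_adj X]
      rw [hadjX, aux_adj_neg]
    rw [hadjY, hadjX, neg_mul_neg] at hRe
    have hR2 : Z * P * (Z * Q) = -R := by rw [hRe, neg_neg]
    have hsqf : ∀ W : M2, W * P * (W * Q) = -R →
        W * P * (W * P) = -R * (Q.adjugate * P) := by
      intro W h
      have e : W * P * (W * Q) * (Q.adjugate * P) = W * P * (W * (Q * Q.adjugate) * P) := by
        noncomm_ring
      rw [hQadj, mul_one] at e
      rw [← e, h]
    have hMM : Z * P * (Z * P) = M₀ * M₀ := by
      rw [hsqf Z hR2, hM0def]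
      exact (hsqf Z₀ hZPZQ).symm
    have hdM : (Z * P).det = 1 := by rw [Matrix.det_mul, hdZ, hdP, mul_one]
    have hCHM : Z * P * (Z * P) = (Z * P).trace • (Z * P) - 1 := by
      rw [aux_CH, hdM, one_smul]
    have hCHM0 : M₀ * M₀ = k • M₀ - 1 := by rw [aux_CH, hdM0, one_smul, htM0]
    have hkey : (Z * P).trace • (Z * P) = k • M₀ := by
      have h := hMM
      rw [hCHM, hCHM0] at h
      exact sub_left_inj.mp h
    have htrsq : (Z * P).trace * (Z * P).trace = k * k := by
      have h := congrArg Matrix.trace hkey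
      rw [Matrix.trace_smul, Matrix.trace_smul, htM0] at h
      simpa [smul_eq_mul] using h
    have hfin : Z = Z₀ ∨ Z = -Z₀ := by
      by_cases hk0 : k = 0
      · -- k = 0 : use the trace conditions and the linear-algebra argument
        subst hk0
        have ht0 : (Z * P).trace = 0 := mul_self_eq_zero.mp (by simpa using htrsq)
        have htY : Y.trace = 0 := by
          rw [hY, Matrix.trace_neg, aux_trace_adj, ht0, neg_zero]
        have htZ : Z.trace = 0 := by rw [← htYZ, htY]
        have htX : X.trace = 0 := htXY.trans htY
        have htZQ : (Z * Q).trace = 0 := by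
          have h := htX
          rw [hX, Matrix.trace_neg, aux_trace_adj] at h
          linarith
        have t1 : Z 0 0 + Z 1 1 = 0 := by rw [Matrix.trace_fin_two] at htZ; exact htZ
        have s1 : Z₀ 0 0 + Z₀ 1 1 = 0 := by
          have h := htZ0
          rw [Matrix.trace_fin_two] at h
          linarith
        have t2 : Z 0 0 * P 0 0 + Z 0 1 * P 1 0 + Z 1 0 * P 0 1 + Z 1 1 * P 1 1 = 0 := by
          have h := ht0
          simp only [Matrix.trace_fin_two, Matrix.mul_apply, Fin.sum_univ_two] at h
          linarith
        have t3 : Z 0 0 * Q 0 0 + Z 0 1 * Q 1 0 + Z 1 0 * Q 0 1 + Z 1 1 * Q 1 1 = 0 := by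
          have h := htZQ
          simp only [Matrix.trace_fin_two, Matrix.mul_apply, Fin.sum_univ_two] at h
          linarith
        have s2 : Z₀ 0 0 * P 0 0 + Z₀ 0 1 * P 1 0 + Z₀ 1 0 * P 0 1 + Z₀ 1 1 * P 1 1 = 0 := by
          have h := htM0
          rw [hM0def] at h
          simp only [Matrix.trace_fin_two, Matrix.mul_apply, Fin.sum_univ_two] at h
          linarith
        have s3 : Z₀ 0 0 * Q 0 0 + Z₀ 0 1 * Q 1 0 + Z₀ 1 0 * Q 0 1 + Z₀ 1 1 * Q 1 1 = 0 := by
          have h := htZ0Q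
          simp only [Matrix.trace_fin_two, Matrix.mul_apply, Fin.sum_univ_two] at h
          linarith
        have hdZ' : Z 0 0 * Z 1 1 - Z 0 1 * Z 1 0 = 1 := by
          rw [Matrix.det_fin_two] at hdZ; exact hdZ
        have hdZ0' : Z₀ 0 0 * Z₀ 1 1 - Z₀ 0 1 * Z₀ 1 0 = 1 := by
          rw [Matrix.det_fin_two] at hdZ0; exact hdZ0
        have hdP' : P 0 0 * P 1 1 - P 0 1 * P 1 0 = 1 := by
          rw [Matrix.det_fin_two] at hdP; exact hdP
        have hdQ' : Q 0 0 * Q 1 1 - Q 0 1 * Q 1 0 = 1 := by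
          rw [Matrix.det_fin_two] at hdQ; exact hdQ
        have htP2 : P 0 0 + P 1 1 = 3 * P 0 1 := by
          rw [Matrix.trace_fin_two] at htP; linarith
        have htQ2 : Q 0 0 + Q 1 1 = 3 * Q 0 1 := by
          rw [Matrix.trace_fin_two] at htQ; linarith
        rcases aux_unique0 (P 0 0) (P 0 1) (P 1 0) (P 1 1) (Q 0 0) (Q 0 1) (Q 1 0) (Q 1 1)
            (Z 0 0) (Z 0 1) (Z 1 0) (Z 1 1) (Z₀ 0 0) (Z₀ 0 1) (Z₀ 1 0) (Z₀ 1 1)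
            hdP' htP2 hdQ' htQ2 hapos hba t1 t2 t3 s1 s2 s3 hdZ' hdZ0' with
          ⟨h00, h01, h10, h11⟩ | ⟨h00, h01, h10, h11⟩
        · exact Or.inl (aux_ext Z Z₀ h00 h01 h10 h11)
        · refine Or.inr (aux_ext Z (-Z₀) ?_ ?_ ?_ ?_) <;>
            simp only [Matrix.neg_apply] <;> assumption
      · -- k ≠ 0
        have hcase : ((Z * P).trace - k) * ((Z * P).trace + k) = 0 := by
          linear_combination htrsq
        rcases mul_eq_zero.mp hcase with h | h
        · left
          have ht : (Z * P).trace = k := by linarith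
          rw [ht] at hkey
          have hMeq : Z * P = M₀ := by
            ext i j
            have h3 := congrFun (congrFun hkey i) j
            simp only [Matrix.smul_apply, smul_eq_mul] at h3
            exact mul_left_cancel₀ hk0 h3
          calc Z = Z * P * P.adjugate := by rw [mul_assoc, hPadj, mul_one]
            _ = M₀ * P.adjugate := by rw [hMeq]
            _ = Z₀ := by rw [hM0def, mul_assoc, hPadj, mul_one]
        · right
          have ht : (Z * P).trace = -k := by linarith
          rw [ht] at hkey
          have hMeq : Z * P = -M₀ := by
            ext i j
            have h3 := congrFun (congrFun hkey i) j
            simp only [Matrix.smul_apply, smul_eq_mul, Matrix.neg_apply] at h3 ⊢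
            have h4 : k * (-((Z * P) i j)) = k * M₀ i j := by linarith
            have h5 := mul_left_cancel₀ hk0 h4
            linarith
          calc Z = Z * P * P.adjugate := by rw [mul_assoc, hPadj, mul_one]
            _ = -M₀ * P.adjugate := by rw [hMeq]
            _ = -Z₀ := by rw [hM0def, neg_mul, mul_assoc, hPadj, mul_one]
    rcases hfin with hZeq | hZeq
    · left
      refine ⟨?_, ?_, hZeq⟩
      · rw [hX, hZeq]
      · rw [hY, hZeq, hY0def, hM0def]
    · right
      refine ⟨?_, ?_, hZeq⟩
      · have e1 : ((-Z₀ : M2) * Q).adjugate = -((Z₀ * Q).adjugate) := by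
          rw [neg_mul, aux_adj_neg]
        rw [hX, hZeq, e1, hX0def, neg_neg]
      · have e2 : ((-Z₀ : M2) * P).adjugate = -(M₀.adjugate) := by
          rw [neg_mul, ← hM0def, aux_adj_neg]
        rw [hY, hZeq, e2, hY0def, neg_neg]
  constructor
  · exact ⟨X₀, Y₀, Z₀, hdecomp0⟩
  · intro X₁ Y₁ Z₁ X₂ Y₂ Z₂ h1 h2
    rcases huniq _ _ _ h1 with ⟨e1, e2, e3⟩ | ⟨e1, e2, e3⟩ <;>
      rcases huniq _ _ _ h2 with ⟨f1, f2, f3⟩ | ⟨f1, f2, f3⟩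
    · left; exact ⟨by rw [f1, ← e1], by rw [f2, ← e2], by rw [f3, ← e3]⟩
    · right; exact ⟨by rw [f1, e1], by rw [f2, e2], by rw [f3, e3]⟩
    · right; exact ⟨by rw [f1, e1, neg_neg], by rw [f2, e2, neg_neg], by rw [f3, e3, neg_neg]⟩
    · left; exact ⟨by rw [f1, e1], by rw [f2, e2], by rw [f3, e3]⟩

theorem stmt9 (k : ℤ) (hk : 0 ≤ k) (P Q R : M2) (hGC : IsGCTriple k P Q R)
    (hba : P 0 1 < Q 0 1) (hbc : R 0 1 < Q 0 1) :
    (∃ X Y Z : M2, IsMMDecomp X Y Z P Q R) ∧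
    (∀ X₁ Y₁ Z₁ X₂ Y₂ Z₂ : M2,
      IsMMDecomp X₁ Y₁ Z₁ P Q R → IsMMDecomp X₂ Y₂ Z₂ P Q R →
      (X₂ = X₁ ∧ Y₂ = Y₁ ∧ Z₂ = Z₁) ∨ (X₂ = -X₁ ∧ Y₂ = -Y₁ ∧ Z₂ = -Z₁)) :=
  stmt9_aux k hk P Q R hGC hba hbc
end

section
/- Fix an integer k ≥ 0 and define Φ(X,Y,Z) = (−(Y·Z)⁻¹, −(X·Z)⁻¹, −(X·Y)⁻¹) for triples of matrices in SL(2,ℤ). Then Φ induces a bijection from the set of k-MM triples onto the set of k-GC triples; that is: (i) for every k-MM triple (X,Y,Z), Φ(X,Y,Z) is a k-GC triple; (ii) if (X₁,Y₁,Z₁) and (X₂,Y₂,Z₂) are k-MM triples with Φ(X₁,Y₁,Z₁) = Φ(X₂,Y₂,Z₂), then (X₁,Y₁,Z₁) = (X₂,Y₂,Z₂); and (iii) every k-GC triple equals Φ(X,Y,Z) for some k-MM triple (X,Y,Z). -/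
open Matrix

/-! ### Auxiliary matrices and lemmas -/

/-- `U = -T⁻¹`. -/
def Umat (k : ℤ) : M2 := !![1, 0; 3 * k + 3, 1]

/-- `V = U⁻¹`. -/
def Vmat (k : ℤ) : M2 := !![1, 0; -(3 * k + 3), 1]

/-- the scalar matrix `k·1`. -/
def Kmat (k : ℤ) : M2 := !![k, 0; 0, k]

lemma hUV (k : ℤ) : Umat k * Vmat k = 1 := by
  ext i j; fin_cases i <;> fin_cases j <;>
    simp [Umat, Vmat, Matrix.mul_apply, Fin.sum_univ_two, Matrix.one_apply] <;> ring

lemma hVU (k : ℤ) : Vmat k * Umat k = 1 := by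
  ext i j; fin_cases i <;> fin_cases j <;>
    simp [Umat, Vmat, Matrix.mul_apply, Fin.sum_univ_two, Matrix.one_apply] <;> ring

lemma hTU (k : ℤ) : Tmat k * Umat k = -1 := by
  ext i j; fin_cases i <;> fin_cases j <;>
    simp [Umat, Tmat, Matrix.mul_apply, Fin.sum_univ_two, Matrix.one_apply] <;> ring

lemma hUT (k : ℤ) : Umat k * Tmat k = -1 := by
  ext i j; fin_cases i <;> fin_cases j <;>
    simp [Umat, Tmat, Matrix.mul_apply, Fin.sum_univ_two, Matrix.one_apply] <;> ring

lemma detU (k : ℤ) : (Umat k).det = 1 := by simp [Umat, Matrix.det_fin_two]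

lemma detV (k : ℤ) : (Vmat k).det = 1 := by simp [Vmat, Matrix.det_fin_two]

/-- Cayley–Hamilton for a matrix with determinant `1` and trace `-k`. -/
lemma CH (k : ℤ) (X : M2) (hd : X.det = 1) (ht : X.trace = -k) :
    X * (X + Kmat k) = -1 ∧ (X + Kmat k) * X = -1 := by
  rw [Matrix.det_fin_two] at hd
  rw [Matrix.trace_fin_two] at ht
  constructor <;>
  · ext i j; fin_cases i <;> fin_cases j <;>
      simp [Kmat, Matrix.mul_apply, Fin.sum_univ_two, Matrix.one_apply] <;>
      first
        | linear_combination X 0 0 * ht - hd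
        | linear_combination X 1 1 * ht - hd
        | linear_combination X 0 1 * ht
        | linear_combination X 1 0 * ht

/-- determinant of `X + k·1` for an MM-type matrix. -/
lemma detShift (k : ℤ) (X : M2) (hd : X.det = 1) (ht : X.trace = -k) :
    (X + Kmat k).det = 1 := by
  rw [Matrix.det_fin_two] at hd ⊢
  rw [Matrix.trace_fin_two] at ht
  simp [Kmat]
  linear_combination hd + k * ht

/-- Structure of the map `Φ` on triples with `X Y Z = T`. -/
lemma lemPhi (k : ℤ) (X Y Z : M2) (hdX : X.det = 1) (htX : X.trace = -k)
    (hdZ : Z.det = 1) (htZ : Z.trace = -k) (hM : X * Y * Z = Tmat k) :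
    -(Y * Z)⁻¹ = Umat k * X ∧ -(X * Y)⁻¹ = Z * Umat k ∧
      -(X * Z)⁻¹ = -((Z + Kmat k) * (X + Kmat k)) ∧
      Y = (X + Kmat k) * Tmat k * (Z + Kmat k) := by
  obtain ⟨hXA, hAX⟩ := CH k X hdX htX
  obtain ⟨hZC, hCZ⟩ := CH k Z hdZ htZ
  have hYZ : Y * Z = -((X + Kmat k) * Tmat k) := by
    have h1 : -(Y * Z) = (X + Kmat k) * Tmat k := by
      calc -(Y * Z) = ((X + Kmat k) * X) * (Y * Z) := by rw [hAX]; noncomm_ring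
        _ = (X + Kmat k) * (X * Y * Z) := by noncomm_ring
        _ = (X + Kmat k) * Tmat k := by rw [hM]
    rw [← h1, neg_neg]
  have hXY : X * Y = -(Tmat k * (Z + Kmat k)) := by
    have h1 : -(X * Y) = Tmat k * (Z + Kmat k) := by
      calc -(X * Y) = (X * Y) * (Z * (Z + Kmat k)) := by rw [hZC]; noncomm_ring
        _ = (X * Y * Z) * (Z + Kmat k) := by noncomm_ring
        _ = Tmat k * (Z + Kmat k) := by rw [hM]
    rw [← h1, neg_neg]
  refine ⟨?_, ?_, ?_, ?_⟩
  · have h2 : (Y * Z) * -(Umat k * X) = 1 := by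
      rw [hYZ]
      calc -((X + Kmat k) * Tmat k) * -(Umat k * X)
          = (X + Kmat k) * (Tmat k * Umat k) * X := by noncomm_ring
        _ = -((X + Kmat k) * X) := by rw [hTU]; noncomm_ring
        _ = 1 := by rw [hAX, neg_neg]
    rw [Matrix.inv_eq_right_inv h2, neg_neg]
  · have h2 : (X * Y) * -(Z * Umat k) = 1 := by
      rw [hXY]
      calc -(Tmat k * (Z + Kmat k)) * -(Z * Umat k)
          = Tmat k * ((Z + Kmat k) * Z) * Umat k := by noncomm_ring
        _ = -(Tmat k * Umat k) := by rw [hCZ]; noncomm_ring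
        _ = 1 := by rw [hTU, neg_neg]
    rw [Matrix.inv_eq_right_inv h2, neg_neg]
  · have h2 : (X * Z) * ((Z + Kmat k) * (X + Kmat k)) = 1 := by
      calc (X * Z) * ((Z + Kmat k) * (X + Kmat k))
          = X * (Z * (Z + Kmat k)) * (X + Kmat k) := by noncomm_ring
        _ = -(X * (X + Kmat k)) := by rw [hZC]; noncomm_ring
        _ = 1 := by rw [hXA, neg_neg]
    rw [Matrix.inv_eq_right_inv h2]
  · have h1 : Y * (Z * (Z + Kmat k)) = -((X + Kmat k) * Tmat k * (Z + Kmat k)) := by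
      calc Y * (Z * (Z + Kmat k)) = (Y * Z) * (Z + Kmat k) := by noncomm_ring
        _ = -((X + Kmat k) * Tmat k) * (Z + Kmat k) := by rw [hYZ]
        _ = -((X + Kmat k) * Tmat k * (Z + Kmat k)) := by noncomm_ring
    rw [hZC] at h1
    have : -Y = -((X + Kmat k) * Tmat k * (Z + Kmat k)) := by
      rw [← h1]; noncomm_ring
    have := congrArg Neg.neg this
    simpa using this

/-- The key matrix identity `-CA = (UX)(ZU) - S`. -/
lemma keyLemma (k : ℤ) (X Z : M2) (hdX : X.det = 1) (htX : X.trace = -k)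
    (hdZ : Z.det = 1) (htZ : Z.trace = -k)
    (htr : ((X + Kmat k) * Tmat k * (Z + Kmat k)).trace = -k) :
    -((Z + Kmat k) * (X + Kmat k)) = (Umat k * X) * (Z * Umat k) - Smat k := by
  rw [Matrix.det_fin_two] at hdX hdZ
  rw [Matrix.trace_fin_two] at htX htZ htr
  simp only [Kmat, Tmat, Matrix.mul_apply, Matrix.add_apply, Matrix.sub_apply,
    Matrix.neg_apply, Fin.sum_univ_two, Matrix.of_apply, Matrix.cons_val', Matrix.cons_val_zero,
    Matrix.cons_val_one, Matrix.head_cons, Matrix.empty_val', Matrix.cons_val_fin_one,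
    Matrix.head_fin_const, Fin.zero_eta, Fin.mk_one, Fin.isValue] at htr
  ext i j
  fin_cases i <;> fin_cases j <;>
    simp only [Kmat, Umat, Smat, Matrix.mul_apply, Matrix.add_apply, Matrix.sub_apply,
    Matrix.neg_apply, Fin.sum_univ_two, Matrix.of_apply, Matrix.cons_val', Matrix.cons_val_zero,
    Matrix.cons_val_one, Matrix.head_cons, Matrix.empty_val', Matrix.cons_val_fin_one,
    Matrix.head_fin_const, Fin.zero_eta, Fin.mk_one, Fin.isValue] <;>
    [ (linear_combination (-(Z 0 0) - 3 * Z 0 1 * k - 3 * Z 0 1) * htX +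
        (-3 * X 0 1 * k - 3 * X 0 1 + X 1 1 + k) * htZ + htr);
      (linear_combination (-(Z 0 1)) * htX + (-(X 0 1)) * htZ);
      (linear_combination (-3 * Z 0 0 ^ 2 - 3 * Z 0 0 * Z 1 1 - 6 * Z 0 0 * k -
          9 * Z 0 1 * k ^ 2 - 18 * Z 0 1 * k - 9 * Z 0 1 - Z 1 0 - 3 * Z 1 1 * k + 3 * k) * htX +
        (9 * X 0 1 * Z 0 0 * k + 9 * X 0 1 * Z 0 0 - 3 * X 0 1 * Z 1 0 - 9 * X 0 1 * k -
          9 * X 0 1 - 3 * X 1 0 * Z 0 1 - X 1 0 + 3 * X 1 1 * Z 0 0 +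
          9 * X 1 1 * Z 0 1 * k + 9 * X 1 1 * Z 0 1 - 3 * X 1 1 * Z 1 1 +
          9 * Z 0 1 * k ^ 2 + 9 * Z 0 1 * k - 3 * Z 1 1 * k + 6 * k) * htZ +
        (-3 * Z 0 0 - 3 * Z 1 1 + 3) * htr);
      (linear_combination (Z 0 0 - 3 * Z 0 1 * k - 3 * Z 0 1 + k) * htX +
        (-3 * X 0 1 * k - 3 * X 0 1 - X 1 1) * htZ + htr) ]

/-- sum of the two `(0,1)` entries. -/
lemma hsumLemma (k : ℤ) (X Z : M2) (htX : X.trace = -k) (htZ : Z.trace = -k) :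
    (-((Z + Kmat k) * (X + Kmat k))) 0 1 + ((X + Kmat k) * Tmat k * (Z + Kmat k)) 0 1 =
      (3 * k + 3) * (X 0 1) * (Z 0 1) - k * (X 0 1 + Z 0 1) := by
  rw [Matrix.trace_fin_two] at htX htZ
  simp only [Kmat, Tmat, Matrix.mul_apply, Matrix.add_apply, Matrix.sub_apply,
    Matrix.neg_apply, Fin.sum_univ_two, Matrix.of_apply, Matrix.cons_val', Matrix.cons_val_zero,
    Matrix.cons_val_one, Matrix.head_cons, Matrix.empty_val', Matrix.cons_val_fin_one,
    Matrix.head_fin_const, Fin.zero_eta, Fin.mk_one, Fin.isValue]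
  linear_combination (-(Z 0 1)) * htX + (-(X 0 1)) * htZ

/-- Vieta swap on the middle element of a GM triple. -/
lemma GMswap (k b q f q2 : ℤ) (hk : 0 ≤ k) (h : IsGMTriple k b q f)
    (hs : q2 + q = (3 * k + 3) * b * f - k * (b + f)) : IsGMTriple k b q2 f := by
  obtain ⟨hb, hq, hf, he⟩ := h
  have hqq2 : q * q2 = b ^ 2 + f ^ 2 + k * b * f := by linear_combination q * hs - he
  have hpos : 0 < q * q2 := by
    rw [hqq2]
    have h1 : 0 < b ^ 2 := by positivity
    have h2 : 0 < f ^ 2 := by positivity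
    have h3 : 0 ≤ k * b * f := by positivity
    linarith
  have hq2 : 0 < q2 := by
    rcases lt_trichotomy q2 0 with h' | h' | h'
    · exfalso; nlinarith
    · exfalso; rw [h'] at hpos; simp at hpos
    · exact h'
  exact ⟨hb, hq2, hf, by linear_combination he + (q2 - q) * hs⟩

theorem stmt10 (k : ℤ) (hk : 0 ≤ k) :
    (∀ X Y Z : M2, IsMMTriple k X Y Z →
        IsGCTriple k (-(Y * Z)⁻¹) (-(X * Z)⁻¹) (-(X * Y)⁻¹)) ∧
    (∀ X₁ Y₁ Z₁ X₂ Y₂ Z₂ : M2,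
        IsMMTriple k X₁ Y₁ Z₁ → IsMMTriple k X₂ Y₂ Z₂ →
        (-(Y₁ * Z₁)⁻¹, -(X₁ * Z₁)⁻¹, -(X₁ * Y₁)⁻¹) =
          (-(Y₂ * Z₂)⁻¹, -(X₂ * Z₂)⁻¹, -(X₂ * Y₂)⁻¹) →
        (X₁, Y₁, Z₁) = (X₂, Y₂, Z₂)) ∧
    (∀ P Q R : M2, IsGCTriple k P Q R →
        ∃ X Y Z : M2, IsMMTriple k X Y Z ∧
          (-(Y * Z)⁻¹, -(X * Z)⁻¹, -(X * Y)⁻¹) = (P, Q, R)) := by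
  refine ⟨?_, ?_, ?_⟩
  · -- part (i)
    intro X Y Z hT
    obtain ⟨⟨hdX, hgX, htX⟩, ⟨hdY, hgY, htY⟩, ⟨hdZ, hgZ, htZ⟩, hM, hGM⟩ := hT
    obtain ⟨hP, hR, hQ, hY⟩ := lemPhi k X Y Z hdX htX hdZ htZ hM
    have htr : ((X + Kmat k) * Tmat k * (Z + Kmat k)).trace = -k := by rw [← hY]; exact htY
    have hkey := keyLemma k X Z hdX htX hdZ htZ htr
    have htX' : X 0 0 + X 1 1 = -k := by rw [← Matrix.trace_fin_two]; exact htX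
    have htZ' : Z 0 0 + Z 1 1 = -k := by rw [← Matrix.trace_fin_two]; exact htZ
    have hP01 : (Umat k * X) 0 1 = X 0 1 := by
      simp only [Umat, Matrix.mul_apply, Matrix.add_apply, Matrix.sub_apply,
    Matrix.neg_apply, Fin.sum_univ_two, Matrix.of_apply, Matrix.cons_val', Matrix.cons_val_zero,
    Matrix.cons_val_one, Matrix.head_cons, Matrix.empty_val', Matrix.cons_val_fin_one,
    Matrix.head_fin_const, Fin.zero_eta, Fin.mk_one, Fin.isValue]
      ring
    have hR01 : (Z * Umat k) 0 1 = Z 0 1 := by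
      simp only [Umat, Matrix.mul_apply, Matrix.add_apply, Matrix.sub_apply,
    Matrix.neg_apply, Fin.sum_univ_two, Matrix.of_apply, Matrix.cons_val', Matrix.cons_val_zero,
    Matrix.cons_val_one, Matrix.head_cons, Matrix.empty_val', Matrix.cons_val_fin_one,
    Matrix.head_fin_const, Fin.zero_eta, Fin.mk_one, Fin.isValue]
      ring
    have hs : (-((Z + Kmat k) * (X + Kmat k))) 0 1 + Y 0 1 =
        (3 * k + 3) * (X 0 1) * (Z 0 1) - k * (X 0 1 + Z 0 1) := by
      have := hsumLemma k X Z htX htZ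
      rw [← hY] at this
      exact this
    have hGM2 : IsGMTriple k (X 0 1) ((-((Z + Kmat k) * (X + Kmat k))) 0 1) (Z 0 1) :=
      GMswap k (X 0 1) (Y 0 1) (Z 0 1) _ hk hGM hs
    rw [hP, hQ, hR]
    refine ⟨⟨?_, ?_, ?_⟩, ⟨?_, ?_, ?_⟩, ⟨?_, ?_, ?_⟩, ?_, ?_⟩
    · rw [Matrix.det_mul, detU, hdX, one_mul]
    · rw [hP01]; exact ⟨X 0 1, Y 0 1, Z 0 1, hGM, Or.inl rfl⟩
    · rw [hP01, Matrix.trace_fin_two]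
      simp only [Umat, Matrix.mul_apply, Matrix.add_apply, Matrix.sub_apply,
    Matrix.neg_apply, Fin.sum_univ_two, Matrix.of_apply, Matrix.cons_val', Matrix.cons_val_zero,
    Matrix.cons_val_one, Matrix.head_cons, Matrix.empty_val', Matrix.cons_val_fin_one,
    Matrix.head_fin_const, Fin.zero_eta, Fin.mk_one, Fin.isValue]
      linear_combination htX'
    · have hneg : (-((Z + Kmat k) * (X + Kmat k))).det = ((Z + Kmat k) * (X + Kmat k)).det := by
        rw [Matrix.det_neg]; norm_num
      rw [hneg, Matrix.det_mul, detShift k X hdX htX, detShift k Z hdZ htZ, mul_one]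
    · exact ⟨X 0 1, _, Z 0 1, hGM2, Or.inr (Or.inl rfl)⟩
    · have htrs := htr
      rw [Matrix.trace_fin_two] at htrs
      simp only [Kmat, Tmat, Matrix.mul_apply, Matrix.add_apply, Matrix.sub_apply,
    Matrix.neg_apply, Fin.sum_univ_two, Matrix.of_apply, Matrix.cons_val', Matrix.cons_val_zero,
    Matrix.cons_val_one, Matrix.head_cons, Matrix.empty_val', Matrix.cons_val_fin_one,
    Matrix.head_fin_const, Fin.zero_eta, Fin.mk_one, Fin.isValue] at htrs
      rw [Matrix.trace_fin_two]
      simp only [Kmat, Matrix.mul_apply, Matrix.add_apply, Matrix.sub_apply,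
    Matrix.neg_apply, Fin.sum_univ_two, Matrix.of_apply, Matrix.cons_val', Matrix.cons_val_zero,
    Matrix.cons_val_one, Matrix.head_cons, Matrix.empty_val', Matrix.cons_val_fin_one,
    Matrix.head_fin_const, Fin.zero_eta, Fin.mk_one, Fin.isValue]
      linear_combination htrs
    · rw [Matrix.det_mul, detU, hdZ, mul_one]
    · rw [hR01]; exact ⟨X 0 1, Y 0 1, Z 0 1, hGM, Or.inr (Or.inr rfl)⟩
    · rw [hR01, Matrix.trace_fin_two]
      simp only [Umat, Matrix.mul_apply, Matrix.add_apply, Matrix.sub_apply,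
    Matrix.neg_apply, Fin.sum_univ_two, Matrix.of_apply, Matrix.cons_val', Matrix.cons_val_zero,
    Matrix.cons_val_one, Matrix.head_cons, Matrix.empty_val', Matrix.cons_val_fin_one,
    Matrix.head_fin_const, Fin.zero_eta, Fin.mk_one, Fin.isValue]
      linear_combination htZ'
    · exact hkey
    · rw [hP01, hR01]; exact hGM2
  · -- part (ii)
    intro X₁ Y₁ Z₁ X₂ Y₂ Z₂ h₁ h₂ heq
    obtain ⟨⟨hdX₁, _, htX₁⟩, _, ⟨hdZ₁, _, htZ₁⟩, hM₁, _⟩ := h₁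
    obtain ⟨⟨hdX₂, _, htX₂⟩, _, ⟨hdZ₂, _, htZ₂⟩, hM₂, _⟩ := h₂
    obtain ⟨hP₁, hR₁, _, hY₁⟩ := lemPhi k X₁ Y₁ Z₁ hdX₁ htX₁ hdZ₁ htZ₁ hM₁
    obtain ⟨hP₂, hR₂, _, hY₂⟩ := lemPhi k X₂ Y₂ Z₂ hdX₂ htX₂ hdZ₂ htZ₂ hM₂
    simp only [Prod.mk.injEq] at heq
    obtain ⟨e1, _, e3⟩ := heq
    have hUX : Umat k * X₁ = Umat k * X₂ := by rw [← hP₁, ← hP₂, e1]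
    have hZU : Z₁ * Umat k = Z₂ * Umat k := by rw [← hR₁, ← hR₂, e3]
    have hX : X₁ = X₂ := by
      calc X₁ = (Vmat k * Umat k) * X₁ := by rw [hVU, one_mul]
        _ = Vmat k * (Umat k * X₁) := by rw [mul_assoc]
        _ = Vmat k * (Umat k * X₂) := by rw [hUX]
        _ = (Vmat k * Umat k) * X₂ := by rw [mul_assoc]
        _ = X₂ := by rw [hVU, one_mul]
    have hZ : Z₁ = Z₂ := by
      calc Z₁ = Z₁ * (Umat k * Vmat k) := by rw [hUV, mul_one]
        _ = (Z₁ * Umat k) * Vmat k := by rw [mul_assoc]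
        _ = (Z₂ * Umat k) * Vmat k := by rw [hZU]
        _ = Z₂ * (Umat k * Vmat k) := by rw [mul_assoc]
        _ = Z₂ := by rw [hUV, mul_one]
    have hYe : Y₁ = Y₂ := by rw [hY₁, hY₂, hX, hZ]
    rw [hX, hYe, hZ]
  · -- part (iii)
    intro P Q R hGC
    obtain ⟨⟨hdP, hgP, htP⟩, ⟨hdQ, hgQ, htQ⟩, ⟨hdR, hgR, htR⟩, hQPR, hGM⟩ := hGC
    set X : M2 := Vmat k * P with hXdef
    set Z : M2 := R * Vmat k with hZdef
    have htP' : P 0 0 + P 1 1 = (3 * k + 3) * P 0 1 - k := by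
      rw [← Matrix.trace_fin_two]; exact htP
    have htR' : R 0 0 + R 1 1 = (3 * k + 3) * R 0 1 - k := by
      rw [← Matrix.trace_fin_two]; exact htR
    have hdX : X.det = 1 := by rw [hXdef, Matrix.det_mul, detV, hdP, one_mul]
    have hdZ : Z.det = 1 := by rw [hZdef, Matrix.det_mul, detV, hdR, mul_one]
    have hX01 : X 0 1 = P 0 1 := by
      rw [hXdef]; simp only [Vmat, Matrix.mul_apply, Matrix.add_apply, Matrix.sub_apply,
    Matrix.neg_apply, Fin.sum_univ_two, Matrix.of_apply, Matrix.cons_val', Matrix.cons_val_zero,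
    Matrix.cons_val_one, Matrix.head_cons, Matrix.empty_val', Matrix.cons_val_fin_one,
    Matrix.head_fin_const, Fin.zero_eta, Fin.mk_one, Fin.isValue]
      ring
    have hZ01 : Z 0 1 = R 0 1 := by
      rw [hZdef]; simp only [Vmat, Matrix.mul_apply, Matrix.add_apply, Matrix.sub_apply,
    Matrix.neg_apply, Fin.sum_univ_two, Matrix.of_apply, Matrix.cons_val', Matrix.cons_val_zero,
    Matrix.cons_val_one, Matrix.head_cons, Matrix.empty_val', Matrix.cons_val_fin_one,
    Matrix.head_fin_const, Fin.zero_eta, Fin.mk_one, Fin.isValue]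
      ring
    have htX : X.trace = -k := by
      rw [hXdef, Matrix.trace_fin_two]
      simp only [Vmat, Matrix.mul_apply, Matrix.add_apply, Matrix.sub_apply,
    Matrix.neg_apply, Fin.sum_univ_two, Matrix.of_apply, Matrix.cons_val', Matrix.cons_val_zero,
    Matrix.cons_val_one, Matrix.head_cons, Matrix.empty_val', Matrix.cons_val_fin_one,
    Matrix.head_fin_const, Fin.zero_eta, Fin.mk_one, Fin.isValue]
      linear_combination htP'
    have htZ : Z.trace = -k := by
      rw [hZdef, Matrix.trace_fin_two]
      simp only [Vmat, Matrix.mul_apply, Matrix.add_apply, Matrix.sub_apply,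
    Matrix.neg_apply, Fin.sum_univ_two, Matrix.of_apply, Matrix.cons_val', Matrix.cons_val_zero,
    Matrix.cons_val_one, Matrix.head_cons, Matrix.empty_val', Matrix.cons_val_fin_one,
    Matrix.head_fin_const, Fin.zero_eta, Fin.mk_one, Fin.isValue]
      linear_combination htR'
    have htQ' : (P * R - Smat k).trace = (3 * k + 3) * ((P * R - Smat k) 0 1) - k := by
      rw [← hQPR]; exact htQ
    rw [Matrix.trace_fin_two] at htQ'
    simp only [Smat, Matrix.mul_apply, Matrix.add_apply, Matrix.sub_apply,
    Matrix.neg_apply, Fin.sum_univ_two, Matrix.of_apply, Matrix.cons_val', Matrix.cons_val_zero,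
    Matrix.cons_val_one, Matrix.head_cons, Matrix.empty_val', Matrix.cons_val_fin_one,
    Matrix.head_fin_const, Fin.zero_eta, Fin.mk_one, Fin.isValue] at htQ'
    set Y : M2 := (X + Kmat k) * Tmat k * (Z + Kmat k) with hYdef
    have htY : Y.trace = -k := by
      rw [hYdef, Matrix.trace_fin_two]
      simp only [hXdef, hZdef, Vmat, Kmat, Tmat, Matrix.mul_apply, Matrix.add_apply, Matrix.sub_apply,
    Matrix.neg_apply, Fin.sum_univ_two, Matrix.of_apply, Matrix.cons_val', Matrix.cons_val_zero,
    Matrix.cons_val_one, Matrix.head_cons, Matrix.empty_val', Matrix.cons_val_fin_one,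
    Matrix.head_fin_const, Fin.zero_eta, Fin.mk_one, Fin.isValue]
      linear_combination (3 * R 0 1 * k + 3 * R 0 1 - k) * htP' +
        (3 * P 0 1 * k + 3 * P 0 1 - k) * htR' + (-1 : ℤ) * htQ'
    have hdY : Y.det = 1 := by
      rw [hYdef, Matrix.det_mul, Matrix.det_mul, detShift k X hdX htX,
        detShift k Z hdZ htZ]
      simp [Tmat, Matrix.det_fin_two]
    obtain ⟨hXA, hAX⟩ := CH k X hdX htX
    obtain ⟨hZC, hCZ⟩ := CH k Z hdZ htZ
    have hM : X * Y * Z = Tmat k := by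
      rw [hYdef]
      calc X * ((X + Kmat k) * Tmat k * (Z + Kmat k)) * Z
          = (X * (X + Kmat k)) * Tmat k * ((Z + Kmat k) * Z) := by noncomm_ring
        _ = (-1 : M2) * Tmat k * (-1 : M2) := by rw [hXA, hCZ]
        _ = Tmat k := by noncomm_ring
    obtain ⟨hP2, hR2, hQ2, _⟩ := lemPhi k X Y Z hdX htX hdZ htZ hM
    have hUXP : Umat k * X = P := by rw [hXdef, ← mul_assoc, hUV, one_mul]
    have hZUR : Z * Umat k = R := by rw [hZdef, mul_assoc, hVU, mul_one]
    have htr : ((X + Kmat k) * Tmat k * (Z + Kmat k)).trace = -k := by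
      rw [← hYdef]; exact htY
    have hQCA : -((Z + Kmat k) * (X + Kmat k)) = Q := by
      rw [keyLemma k X Z hdX htX hdZ htZ htr, hUXP, hZUR, ← hQPR]
    have hs : Y 0 1 + Q 0 1 = (3 * k + 3) * P 0 1 * R 0 1 - k * (P 0 1 + R 0 1) := by
      have h1 := hsumLemma k X Z htX htZ
      rw [← hYdef, hQCA, hX01, hZ01] at h1
      linarith
    have hGMY : IsGMTriple k (P 0 1) (Y 0 1) (R 0 1) := by
      refine GMswap k (P 0 1) (Q 0 1) (R 0 1) (Y 0 1) hk hGM ?_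
      linarith
    refine ⟨X, Y, Z, ⟨⟨hdX, ?_, htX⟩, ⟨hdY, ?_, htY⟩, ⟨hdZ, ?_, htZ⟩, hM, ?_⟩, ?_⟩
    · rw [hX01]; exact hgP
    · exact ⟨P 0 1, Y 0 1, R 0 1, hGMY, Or.inr (Or.inl rfl)⟩
    · rw [hZ01]; exact hgR
    · rw [hX01, hZ01]; exact hGMY
    · rw [hP2, hR2, hQ2, hUXP, hZUR, hQCA]
end

section
/- Fix an integer k ≥ 0. Define Φ(X,Y,Z) = (−(Y·Z)⁻¹, −(X·Z)⁻¹, −(X·Y)⁻¹) and let Ψ'(P,Q,R) = (ψ'(P), ψ'(Q), ψ'(R)) (componentwise application of ψ'). Then for every k-MM triple (X,Y,Z), the triple Ψ'(Φ(X,Y,Z)) is again a k-MM triple, and applying Ψ'∘Φ twice returns the original triple: Ψ'(Φ(Ψ'(Φ(X,Y,Z)))) = (X,Y,Z). (Equivalently, (Ψ'∘Φ)² is the identity on the set of k-MM triples, and hence (Φ∘Ψ')² is the identity on the set of k-GC triples.) -/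
open Matrix

/-- The map `Φ(X,Y,Z) = (−(Y·Z)⁻¹, −(X·Z)⁻¹, −(X·Y)⁻¹)` on triples of matrices. -/
noncomputable def PhiT (t : M2 × M2 × M2) : M2 × M2 × M2 :=
  (-(t.2.1 * t.2.2)⁻¹, -(t.1 * t.2.2)⁻¹, -(t.1 * t.2.1)⁻¹)

/-- Componentwise application of `ψ'`. -/
def PsiT' (k : ℤ) (t : M2 × M2 × M2) : M2 × M2 × M2 :=
  (psi' k t.1, psi' k t.2.1, psi' k t.2.2)

private lemma inv_eq_adj (A : M2) (hA : A.det = 1) : A⁻¹ = A.adjugate := by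
  rw [Matrix.inv_def, hA, Ring.inverse_one, one_smul]

private lemma phi_eq (k : ℤ) (X Y Z : M2) (hX : X.det = 1) (hY : Y.det = 1)
    (hZ : Z.det = 1) (hp : X * Y * Z = Tmat k) :
    PhiT (X, Y, Z) = (!![1, 0; 3 * k + 3, 1] * X, -(X * Z).adjugate, Z * !![1, 0; 3 * k + 3, 1]) := by
  have hXu : IsUnit X.det := by rw [hX]; exact isUnit_one
  have hZu : IsUnit Z.det := by rw [hZ]; exact isUnit_one
  have hdT : (Tmat k).det = 1 := by simp [Tmat, Matrix.det_fin_two_of]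
  have hTinv : (Tmat k)⁻¹ = !![-1, 0; -(3 * k + 3), -1] := by
    rw [inv_eq_adj _ hdT]
    ext x y
    fin_cases x <;> fin_cases y <;> simp [Tmat, Matrix.adjugate_fin_two]
  have h1 : Y * Z = X⁻¹ * Tmat k := by
    have h' := congrArg (fun M => X⁻¹ * M) hp
    simpa [← Matrix.mul_assoc, Matrix.nonsing_inv_mul X hXu] using h'
  have h3 : X * Y = Tmat k * Z⁻¹ := by
    have h' := congrArg (fun M => M * Z⁻¹) hp
    simpa [Matrix.mul_assoc, Matrix.mul_nonsing_inv Z hZu] using h'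
  have c1 : -(Y * Z)⁻¹ = !![1, 0; 3 * k + 3, 1] * X := by
    rw [h1, Matrix.mul_inv_rev, Matrix.nonsing_inv_nonsing_inv X hXu, hTinv, ← neg_mul]
    congr 1
    ext x y
    fin_cases x <;> fin_cases y <;> simp
  have c2 : -(X * Z)⁻¹ = -(X * Z).adjugate := by
    rw [inv_eq_adj _ (by rw [Matrix.det_mul, hX, hZ, one_mul])]
  have c3 : -(X * Y)⁻¹ = Z * !![1, 0; 3 * k + 3, 1] := by
    rw [h3, Matrix.mul_inv_rev, Matrix.nonsing_inv_nonsing_inv Z hZu, hTinv, ← mul_neg]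
    congr 1
    ext x y
    fin_cases x <;> fin_cases y <;> simp
  simp only [PhiT]
  exact Prod.ext c1 (Prod.ext c2 c3)

set_option maxHeartbeats 1000000 in
theorem stmt11 (k : ℤ) (hk : 0 ≤ k) (X Y Z : M2) (h : IsMMTriple k X Y Z) :
    IsMMTriple k (PsiT' k (PhiT (X, Y, Z))).1 (PsiT' k (PhiT (X, Y, Z))).2.1
      (PsiT' k (PhiT (X, Y, Z))).2.2 ∧
    PsiT' k (PhiT (PsiT' k (PhiT (X, Y, Z)))) = (X, Y, Z) := by
  obtain ⟨⟨hdX, hgX, htX⟩, ⟨hdY, hgY, htY⟩, ⟨hdZ, hgZ, htZ⟩, hprod, hgm⟩ := h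
  have hXu : IsUnit X.det := by rw [hdX]; exact isUnit_one
  have hZu : IsUnit Z.det := by rw [hdZ]; exact isUnit_one
  have hY : Y = X.adjugate * (Tmat k * Z.adjugate) := by
    have h1 : Y * Z = X⁻¹ * Tmat k := by
      have h' := congrArg (fun M => X⁻¹ * M) hprod
      simpa [← Matrix.mul_assoc, Matrix.nonsing_inv_mul X hXu] using h'
    have h2 := congrArg (fun M => M * Z⁻¹) h1
    simp only [Matrix.mul_assoc, Matrix.mul_nonsing_inv Z hZu, mul_one] at h2
    rw [inv_eq_adj X hdX, inv_eq_adj Z hdZ] at h2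
    exact h2
  subst hY
  obtain ⟨a, b, c, d, rfl⟩ : ∃ a b c d, X = !![a, b; c, d] := ⟨_, _, _, _, Matrix.eta_fin_two X⟩
  obtain ⟨i, j, l, m, rfl⟩ : ∃ i j l m, Z = !![i, j; l, m] := ⟨_, _, _, _, Matrix.eta_fin_two Z⟩
  have htX' : a + d = -k := by simpa [Matrix.trace_fin_two_of] using htX
  have hd : d = -k - a := by linarith
  subst hd
  have htZ' : i + m = -k := by simpa [Matrix.trace_fin_two_of] using htZ
  have hm : m = -k - i := by linarith
  subst hm
  have eY : (!![a, b; c, -k - a]).adjugate * (Tmat k * (!![i, j; l, -k - i]).adjugate) = !![3*k^2*b + 3*k*b*i - k^2 - k*a + 3*k*b - k*i - a*i + 3*b*i - b*l, 3*k*b*j + b*i - k*j - a*j + 3*b*j; -3*k^2*a - 3*k*a*i - 3*k*a - k*c - 3*a*i - c*i + a*l, -3*k*a*j - a*i - 3*a*j - c*j] := by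
    ext x y
    fin_cases x <;> fin_cases y <;>
      simp only [psi', Tmat, Matrix.mul_fin_two, Matrix.adjugate_fin_two, Matrix.neg_apply,
        Matrix.cons_val', Matrix.cons_val_zero, Matrix.cons_val_one, Matrix.head_cons,
        Matrix.head_fin_const, Matrix.empty_val', Matrix.cons_val_fin_one, Matrix.of_apply,
        Fin.isValue, Fin.mk_zero, Fin.mk_one] <;> ring
  rw [eY] at hdY htY hgm hprod ⊢
  have hA : a * (-k - a) - b * c = 1 := by simpa [Matrix.det_fin_two_of] using hdX
  have hB : i * (-k - i) - j * l = 1 := by simpa [Matrix.det_fin_two_of] using hdZ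
  have hT1 : 3*k^2*b + 3*k*b*i - 3*k*a*j - k^2 - k*a + 3*k*b - k*i - 2*a*i + 3*b*i - 3*a*j - c*j - b*l + k = 0 := by
    have h' : (3*k^2*b + 3*k*b*i - k^2 - k*a + 3*k*b - k*i - a*i + 3*b*i - b*l) + (-3*k*a*j - a*i - 3*a*j - c*j) = -k := by
      simpa [Matrix.trace_fin_two_of] using htY
    linear_combination h'
  obtain ⟨hb, hf, hj, heq⟩ := hgm
  simp only [Matrix.cons_val', Matrix.cons_val_zero, Matrix.cons_val_one, Matrix.head_cons,
    Matrix.head_fin_const, Matrix.empty_val', Matrix.cons_val_fin_one, Matrix.of_apply,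
    Fin.isValue] at hb hf hj heq
  have eXp : psi' k (!![1, 0; 3 * k + 3, 1] * !![a, b; c, -k - a]) = !![k*b - k - a, b; -k^2*b + k^2 + 2*k*a + c, -k*b + a] := by
    ext x y
    fin_cases x <;> fin_cases y <;>
      simp only [psi', Tmat, Matrix.mul_fin_two, Matrix.adjugate_fin_two, Matrix.neg_apply,
        Matrix.cons_val', Matrix.cons_val_zero, Matrix.cons_val_one, Matrix.head_cons,
        Matrix.head_fin_const, Matrix.empty_val', Matrix.cons_val_fin_one, Matrix.of_apply,
        Fin.isValue, Fin.mk_zero, Fin.mk_one] <;> ring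
  have eYp : psi' k (-(!![a, b; c, -k - a] * !![i, j; l, -k - i]).adjugate) = !![-k^2*b - k*b*i + k*a*j + k^2 + k*a + k*i + a*i + c*j - k, -k*b - b*i + a*j; k^3*b + k^2*b*i - k^2*a*j + k^3 + k^2*a + k^2*i + k*a*i + k*c*j + 4*k^2 + 3*k*a + 3*k*i + 3*a*i + c*i + 3*c*j - k*l - a*l, -2*k^2*b - 2*k*b*i + 2*k*a*j - 3*k*b + a*i - 3*b*i + 3*a*j + b*l - k] := by
    ext x y
    fin_cases x <;> fin_cases y <;>
      simp only [psi', Tmat, Matrix.mul_fin_two, Matrix.adjugate_fin_two, Matrix.neg_apply,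
        Matrix.cons_val', Matrix.cons_val_zero, Matrix.cons_val_one, Matrix.head_cons,
        Matrix.head_fin_const, Matrix.empty_val', Matrix.cons_val_fin_one, Matrix.of_apply,
        Fin.isValue, Fin.mk_zero, Fin.mk_one] <;> ring
  have eZp : psi' k (!![i, j; l, -k - i] * !![1, 0; 3 * k + 3, 1]) = !![-2*k*j - k - i - 3*j, j; -4*k^2*j - 2*k^2 - 4*k*i - 12*k*j - 3*k - 6*i - 9*j + l, 2*k*j + i + 3*j] := by
    ext x y
    fin_cases x <;> fin_cases y <;>
      simp only [psi', Tmat, Matrix.mul_fin_two, Matrix.adjugate_fin_two, Matrix.neg_apply,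
        Matrix.cons_val', Matrix.cons_val_zero, Matrix.cons_val_one, Matrix.head_cons,
        Matrix.head_fin_const, Matrix.empty_val', Matrix.cons_val_fin_one, Matrix.of_apply,
        Fin.isValue, Fin.mk_zero, Fin.mk_one] <;> ring
  have hdXp : (!![k*b - k - a, b; -k^2*b + k^2 + 2*k*a + c, -k*b + a] : M2).det = 1 := by
    rw [Matrix.det_fin_two_of]; linear_combination (1) * hA
  have hdYp : (!![-k^2*b - k*b*i + k*a*j + k^2 + k*a + k*i + a*i + c*j - k, -k*b - b*i + a*j; k^3*b + k^2*b*i - k^2*a*j + k^3 + k^2*a + k^2*i + k*a*i + k*c*j + 4*k^2 + 3*k*a + 3*k*i + 3*a*i + c*i + 3*c*j - k*l - a*l, -2*k^2*b - 2*k*b*i + 2*k*a*j - 3*k*b + a*i - 3*b*i + 3*a*j + b*l - k] : M2).det = 1 := by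
    rw [Matrix.det_fin_two_of]; linear_combination (-k*i - i^2 - j*l) * hA + (1) * hB + (k^2*b + k*b*i - k*a*j + k) * hT1
  have hdZp : (!![-2*k*j - k - i - 3*j, j; -4*k^2*j - 2*k^2 - 4*k*i - 12*k*j - 3*k - 6*i - 9*j + l, 2*k*j + i + 3*j] : M2).det = 1 := by
    rw [Matrix.det_fin_two_of]; linear_combination (1) * hB
  have htrXp : (!![k*b - k - a, b; -k^2*b + k^2 + 2*k*a + c, -k*b + a] : M2).trace = -k := by rw [Matrix.trace_fin_two_of]; ring
  have htrYp : (!![-k^2*b - k*b*i + k*a*j + k^2 + k*a + k*i + a*i + c*j - k, -k*b - b*i + a*j; k^3*b + k^2*b*i - k^2*a*j + k^3 + k^2*a + k^2*i + k*a*i + k*c*j + 4*k^2 + 3*k*a + 3*k*i + 3*a*i + c*i + 3*c*j - k*l - a*l, -2*k^2*b - 2*k*b*i + 2*k*a*j - 3*k*b + a*i - 3*b*i + 3*a*j + b*l - k] : M2).trace = -k := by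
    rw [Matrix.trace_fin_two_of]; linear_combination (-1) * hT1
  have htrZp : (!![-2*k*j - k - i - 3*j, j; -4*k^2*j - 2*k^2 - 4*k*i - 12*k*j - 3*k - 6*i - 9*j + l, 2*k*j + i + 3*j] : M2).trace = -k := by rw [Matrix.trace_fin_two_of]; ring
  have hprodp : (!![k*b - k - a, b; -k^2*b + k^2 + 2*k*a + c, -k*b + a] : M2) * !![-k^2*b - k*b*i + k*a*j + k^2 + k*a + k*i + a*i + c*j - k, -k*b - b*i + a*j; k^3*b + k^2*b*i - k^2*a*j + k^3 + k^2*a + k^2*i + k*a*i + k*c*j + 4*k^2 + 3*k*a + 3*k*i + 3*a*i + c*i + 3*c*j - k*l - a*l, -2*k^2*b - 2*k*b*i + 2*k*a*j - 3*k*b + a*i - 3*b*i + 3*a*j + b*l - k] * !![-2*k*j - k - i - 3*j, j; -4*k^2*j - 2*k^2 - 4*k*i - 12*k*j - 3*k - 6*i - 9*j + l, 2*k*j + i + 3*j] = Tmat k := by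
    ext x y
    fin_cases x <;> fin_cases y <;>
      simp only [psi', Tmat, Matrix.mul_fin_two, Matrix.adjugate_fin_two, Matrix.neg_apply,
        Matrix.cons_val', Matrix.cons_val_zero, Matrix.cons_val_one, Matrix.head_cons,
        Matrix.head_fin_const, Matrix.empty_val', Matrix.cons_val_fin_one, Matrix.of_apply,
        Fin.isValue, Fin.mk_zero, Fin.mk_one]
    · refine mul_left_cancel₀ (a := j) hj.ne' ?_
      linear_combination (-j) * hA + (3*k^2*b^2 + 3*k*b^2*i - 3*k*a*b*j - k^2*b - k*a*b + 3*k*b^2 - k*b*i - 2*a*b*i + 3*b^2*i + k*a*j + a^2*j - 3*a*b*j - b^2*l + k*b) * hB + (4*k^2*b*j^2 + 2*k^2*b*j + 4*k*b*i*j - 2*k^2*j^2 - 2*k*a*j^2 + 12*k*b*j^2 + k*b*i + b*i^2 - k^2*j - k*a*j + 3*k*b*j - k*i*j - a*i*j + 6*b*i*j - 3*k*j^2 - 3*a*j^2 + 9*b*j^2 + b) * hT1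
    · linear_combination (-2*k*b*j - b*i + k*j + a*j - 3*b*j) * hT1
    · refine mul_left_cancel₀ (a := b * j) (mul_pos hb hj).ne' ?_
      linear_combination (-6*k^3*b*j^2 - 6*k^2*b*i*j^2 + 6*k^2*a*j^3 - 3*k^3*b*j - 8*k^2*b*i*j - 5*k*b*i^2*j + 2*k^3*j^2 + 5*k^2*a*j^2 - 15*k^2*b*j^2 + 2*k^2*i*j^2 + 7*k*a*i*j^2 - 15*k*b*i*j^2 + 15*k*a*j^3 + 2*k*c*j^3 + k^3*j + k^2*a*j - 3*k^2*b*j + 2*k^2*i*j + 2*k*a*i*j - 9*k*b*i*j + k*i^2*j + a*i^2*j - 6*b*i^2*j + k^2*j^2 + 6*k*a*j^2 - 9*k*b*j^2 + k*c*j^2 + 3*k*i*j^2 + 9*a*i*j^2 - 9*b*i*j^2 + c*i*j^2 + 9*a*j^3 + 3*c*j^3 + k*b*j*l + b*i*j*l - a*j^2*l - k^2*j + k*b*j - k*i*j - 3*k*j^2 - a*j) * hA + (-3*k^3*b^3 - 3*k^2*b^3*i + 3*k^2*a*b^2*j + k^3*b^2 + 4*k^2*a*b^2 - 3*k^2*b^3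 + k^2*b^2*i + 5*k*a*b^2*i - 3*k*b^3*i - k^2*a*b*j - 4*k*a^2*b*j + 3*k*a*b^2*j + k*b^3*l - k^2*a*b - k*a^2*b - k^2*b^2 + 3*k*a*b^2 - k*a*b*i - 2*a^2*b*i + 3*a*b^2*i + k*a^2*j + a^3*j - 3*a^2*b*j - a*b^2*l + k*a*b + 2*k*b*j + a*j + 3*b*j) * hB + (-4*k^3*b^2*j^2 - 2*k^3*b^2*j - 4*k^2*b^2*i*j + 2*k^3*b*j^2 + 6*k^2*a*b*j^2 - 12*k^2*b^2*j^2 - k^2*b^2*i - k*b^2*i^2 + k^3*b*j + 3*k^2*a*b*j - 3*k^2*b^2*j + k^2*b*i*j + 5*k*a*b*i*j - 6*k*b^2*i*j - 2*k^2*a*j^2 - 2*k*a^2*j^2 + 3*k^2*b*j^2 + 15*k*a*b*j^2 - 9*k*b^2*j^2 + k*a*b*i + a*b*i^2 - k^2*a*j - k*a^2*j + 3*k*a*b*j - k*a*i*j - a^2*i*j + 6*a*b*i*j - 3*k*a*j^2 - 3*a^2*j^2 + 9*a*b*j^2 - k*b^2 - 2*k*j^2 + a*b - k*j - i*j - 3*j^2)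 * hT1
    · refine mul_left_cancel₀ (a := b) hb.ne' ?_
      linear_combination (3*k^2*b*j + 3*k*b*i*j - 3*k*a*j^2 + k*b*i + b*i^2 - k^2*j - k*a*j + 3*k*b*j - k*i*j - 2*a*i*j + 3*b*i*j - 3*a*j^2 - c*j^2 + k*j) * hA + (-b) * hB + (2*k^2*b^2*j + k*b^2*i - k^2*b*j - 3*k*a*b*j + 3*k*b^2*j - a*b*i + k*a*j + a^2*j - 3*a*b*j + j) * hT1
  have hfq : (3*k*b*j + b*i - k*j - a*j + 3*b*j) * (-k*b - b*i + a*j) = b ^ 2 + j ^ 2 + k * b * j := by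
    linear_combination (j^2) * hA + (b^2) * hB + (-b*j) * hT1
  have hq : 0 < -k*b - b*i + a*j := by
    nlinarith [hf, hb, hj, hfq, mul_pos hb hb, mul_pos hj hj,
      mul_nonneg (mul_nonneg hk hb.le) hj.le]
  have htrip : IsGMTriple k b (-k*b - b*i + a*j) j := by
    refine ⟨hb, hq, hj, ?_⟩
    linear_combination heq
  have hgnb : IsGMNumber k b := ⟨b, _, j, htrip, Or.inl rfl⟩
  have hgnq : IsGMNumber k (-k*b - b*i + a*j) := ⟨b, _, j, htrip, Or.inr (Or.inl rfl)⟩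
  have hgnj : IsGMNumber k j := ⟨b, _, j, htrip, Or.inr (Or.inr rfl)⟩
  rw [phi_eq k _ _ _ hdX hdY hdZ hprod]
  simp only [PsiT']
  rw [eXp, eYp, eZp]
  constructor
  · refine ⟨⟨hdXp, ?_, htrXp⟩, ⟨hdYp, ?_, htrYp⟩, ⟨hdZp, ?_, htrZp⟩, hprodp, ?_⟩
    · simpa using hgnb
    · simpa using hgnq
    · simpa using hgnj
    · simpa using htrip
  · rw [phi_eq k _ _ _ hdXp hdYp hdZp hprodp]
    simp only [PsiT']
    refine Prod.ext ?_ (Prod.ext ?_ ?_)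
    · ext x y
      fin_cases x <;> fin_cases y <;>
        simp only [psi', Tmat, Matrix.mul_fin_two, Matrix.adjugate_fin_two, Matrix.neg_apply,
        Matrix.cons_val', Matrix.cons_val_zero, Matrix.cons_val_one, Matrix.head_cons,
        Matrix.head_fin_const, Matrix.empty_val', Matrix.cons_val_fin_one, Matrix.of_apply,
        Fin.isValue, Fin.mk_zero, Fin.mk_one] <;> ring
    · ext x y
      fin_cases x <;> fin_cases y <;>
        simp only [psi', Tmat, Matrix.mul_fin_two, Matrix.adjugate_fin_two, Matrix.neg_apply,
        Matrix.cons_val', Matrix.cons_val_zero, Matrix.cons_val_one, Matrix.head_cons,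
        Matrix.head_fin_const, Matrix.empty_val', Matrix.cons_val_fin_one, Matrix.of_apply,
        Fin.isValue, Fin.mk_zero, Fin.mk_one]
      · linear_combination (-1) * hT1
      · ring
      · linear_combination (k) * hT1
      · linear_combination (-1) * hT1
    · ext x y
      fin_cases x <;> fin_cases y <;>
        simp only [psi', Tmat, Matrix.mul_fin_two, Matrix.adjugate_fin_two, Matrix.neg_apply,
        Matrix.cons_val', Matrix.cons_val_zero, Matrix.cons_val_one, Matrix.head_cons,
        Matrix.head_fin_const, Matrix.empty_val', Matrix.cons_val_fin_one, Matrix.of_apply,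
        Fin.isValue, Fin.mk_zero, Fin.mk_one] <;> ring
end

section
/- Fix ℓ ∈ ℤ and consider the tree MMT(2,ℓ) (the k-MM tree with k = 2). For every binary word w, write N(w) = (X,Y,Z). Then there exist nonnegative integers a, a', b, b', c, c' with gcd(a,a') = gcd(b,b') = gcd(c,c') = 1 such that the (1,2)- and (2,1)-entries satisfy x₁₂ = a², x₂₁ = −a'², y₁₂ = b², y₂₁ = −b'², z₁₂ = c², z₂₁ = −c'². (Here gcd(n,0) = n, so coprimality with 0 means the other number is 1.) -/
open Matrix

/-- One generation step of the `k`-MM tree `MMT(k,ℓ)`. -/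
noncomputable def mmStep (t : M2 × M2 × M2) (d : Bool) : M2 × M2 × M2 :=
  match t, d with
  | (X, Y, Z), false => (X, Y * Z * Y⁻¹, Y)
  | (X, Y, Z), true  => (Y, Y⁻¹ * X * Y, Z)

/-- The root matrix `X_ℓ` of `MMT(k,ℓ)`. -/
def Xroot (k l : ℤ) : M2 := !![l, 1; -l ^ 2 - k * l - 1, -k - l]

/-- The root matrix `Y_ℓ` of `MMT(k,ℓ)`. -/
def Yroot (k l : ℤ) : M2 :=
  !![k * l - k + 2 * l - 1, k + 2;
     -(k * l ^ 2) - 2 * l ^ 2 + k * l + 2 * l - 1, -(k * l) - 2 * l + 1]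

/-- The root matrix `Z_ℓ` of `MMT(k,ℓ)`. -/
def Zroot (k l : ℤ) : M2 :=
  !![-k + l - 1, 1; -l ^ 2 + k * l + 2 * l - k - 2, -l + 1]

/-- The `k`-MM tree `MMT(k,ℓ)`, encoded on binary words. -/
noncomputable def MMtree (k l : ℤ) (w : List Bool) : M2 × M2 × M2 :=
  w.foldl mmStep (Xroot k l, Yroot k l, Zroot k l)

/-! ### Auxiliary machinery -/

/-- The canonical matrix of trace `-2` attached to a vector `(a, b)`. -/
def F (v : ℤ × ℤ) : M2 := !![-1 - v.1 * v.2, v.1 ^ 2; -(v.2 ^ 2), -1 + v.1 * v.2]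

/-- Matrix-vector multiplication on pairs. -/
def mv (S : M2) (v : ℤ × ℤ) : ℤ × ℤ :=
  (S 0 0 * v.1 + S 0 1 * v.2, S 1 0 * v.1 + S 1 1 * v.2)

lemma detF (v : ℤ × ℤ) : (F v).det = 1 := by
  simp [F, Matrix.det_fin_two_of]; ring

lemma swapF (S : M2) (hS : S.det = 1) (v : ℤ × ℤ) :
    S * F v = F (mv S v) * S := by
  have hd : S 0 0 * S 1 1 - S 0 1 * S 1 0 = 1 := by rwa [Matrix.det_fin_two] at hS
  ext i j
  fin_cases i <;> fin_cases j <;>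
    simp [F, mv, Matrix.mul_apply, Fin.sum_univ_two] <;>
    first
      | linear_combination ((S 0 0 * v.1 + S 0 1 * v.2) * v.2) * hd
      | linear_combination (-(S 0 0 * v.1 + S 0 1 * v.2) * v.1) * hd
      | linear_combination ((S 1 0 * v.1 + S 1 1 * v.2) * v.2) * hd
      | linear_combination (-(S 1 0 * v.1 + S 1 1 * v.2) * v.1) * hd

lemma conjF (S : M2) (hS : S.det = 1) (v : ℤ × ℤ) :
    S * F v * S⁻¹ = F (mv S v) := by
  have hu : IsUnit S.det := by rw [hS]; exact isUnit_one
  rw [swapF S hS v, Matrix.mul_assoc, Matrix.mul_nonsing_inv S hu, Matrix.mul_one]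

lemma conjF' (S : M2) (hS : S.det = 1) (v : ℤ × ℤ) :
    S⁻¹ * F v * S = F (mv S.adjugate v) := by
  have hadj : S.adjugate.det = 1 := by
    rw [Matrix.det_adjugate, hS]; ring
  have hinv : S⁻¹ = S.adjugate := by
    rw [Matrix.inv_def, hS]; simp
  have hadjinv : S.adjugate⁻¹ = S := by
    apply Matrix.inv_eq_right_inv
    rw [Matrix.adjugate_mul, hS, one_smul]
  have h := conjF S.adjugate hadj v
  rw [hadjinv] at h
  rw [hinv]
  exact h

lemma coprime_mv (S : M2) (hS : S.det = 1) (v : ℤ × ℤ) (h : IsCoprime v.1 v.2) :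
    IsCoprime (mv S v).1 (mv S v).2 := by
  have hd : S 0 0 * S 1 1 - S 0 1 * S 1 0 = 1 := by rwa [Matrix.det_fin_two] at hS
  obtain ⟨x, y, hxy⟩ := h
  exact ⟨x * S 1 1 - y * S 1 0, -x * S 0 1 + y * S 0 0, by
    simp only [mv]
    linear_combination hxy + (x * v.1 + y * v.2) * hd⟩

/-- The invariant: each matrix of the triple is `F` of a primitive vector. -/
def Good (t : M2 × M2 × M2) : Prop :=
  ∃ p q r : ℤ × ℤ, IsCoprime p.1 p.2 ∧ IsCoprime q.1 q.2 ∧ IsCoprime r.1 r.2 ∧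
    t.1 = F p ∧ t.2.1 = F q ∧ t.2.2 = F r

lemma good_step_s13 (t : M2 × M2 × M2) (d : Bool) (h : Good t) : Good (mmStep t d) := by
  obtain ⟨X, Y, Z⟩ := t
  obtain ⟨p, q, r, hp, hq, hr, h1, h2, h3⟩ := h
  simp only at h1 h2 h3
  have hadj : (F q).adjugate.det = 1 := by
    rw [Matrix.det_adjugate, detF]; ring
  cases d
  · refine ⟨p, mv (F q) r, q, hp, coprime_mv _ (detF q) r hr, hq, h1, ?_, h2⟩
    show Y * Z * Y⁻¹ = F (mv (F q) r)
    rw [h2, h3]; exact conjF _ (detF q) r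
  · refine ⟨q, mv (F q).adjugate p, r, hq, coprime_mv _ hadj p hp, hr, h2, ?_, h3⟩
    show Y⁻¹ * X * Y = F (mv (F q).adjugate p)
    rw [h2, h1]; exact conjF' _ (detF q) p

lemma good_foldl (w : List Bool) : ∀ t : M2 × M2 × M2, Good t → Good (w.foldl mmStep t) := by
  induction w with
  | nil => exact fun t h => h
  | cons d w ih => exact fun t h => ih _ (good_step_s13 t d h)

lemma good_root (l : ℤ) : Good (Xroot 2 l, Yroot 2 l, Zroot 2 l) := by
  refine ⟨(1, -(l + 1)), (2, 1 - 2 * l), (1, 2 - l),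
    isCoprime_one_left, ⟨l, 1, by ring⟩, isCoprime_one_left, ?_, ?_, ?_⟩ <;>
  · ext i j
    fin_cases i <;> fin_cases j <;> simp [Xroot, Yroot, Zroot, F] <;> ring

lemma entries_of_F (p : ℤ × ℤ) :
    (F p) 0 1 = ((p.1.natAbs : ℤ)) ^ 2 ∧ (F p) 1 0 = -((p.2.natAbs : ℤ)) ^ 2 := by
  constructor <;> simp [F, Int.natAbs_sq]

theorem stmt13 (l : ℤ) (w : List Bool) :
    ∃ a a' b b' c c' : ℕ,
      Nat.gcd a a' = 1 ∧ Nat.gcd b b' = 1 ∧ Nat.gcd c c' = 1 ∧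
      (MMtree 2 l w).1 0 1 = (a : ℤ) ^ 2 ∧ (MMtree 2 l w).1 1 0 = -(a' : ℤ) ^ 2 ∧
      (MMtree 2 l w).2.1 0 1 = (b : ℤ) ^ 2 ∧ (MMtree 2 l w).2.1 1 0 = -(b' : ℤ) ^ 2 ∧
      (MMtree 2 l w).2.2 0 1 = (c : ℤ) ^ 2 ∧ (MMtree 2 l w).2.2 1 0 = -(c' : ℤ) ^ 2 := by
  obtain ⟨p, q, r, hp, hq, hr, h1, h2, h3⟩ := good_foldl w _ (good_root l)
  refine ⟨p.1.natAbs, p.2.natAbs, q.1.natAbs, q.2.natAbs, r.1.natAbs, r.2.natAbs,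
    Int.isCoprime_iff_gcd_eq_one.mp hp, Int.isCoprime_iff_gcd_eq_one.mp hq,
    Int.isCoprime_iff_gcd_eq_one.mp hr, ?_, ?_, ?_, ?_, ?_, ?_⟩ <;>
    simp only [MMtree, h1, h2, h3] <;>
    first
      | exact (entries_of_F p).1 | exact (entries_of_F p).2
      | exact (entries_of_F q).1 | exact (entries_of_F q).2
      | exact (entries_of_F r).1 | exact (entries_of_F r).2
end

section
/- Fix ℓ ∈ ℤ. For every binary word w, write V(w) = ((p,p'),(q,q'),(r,r')) for the vertex of the parabolic fixed point tree PT(ℓ) at w. Then: q·p' − q'·p < −1, q·r' − q'·r > 1, r·p' − r'·p < −1, and moreover q > r and q > p. -/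
/-- One generation step of the parabolic fixed point tree `PT(ℓ)`. -/
def ptStep (t : (ℤ × ℤ) × (ℤ × ℤ) × (ℤ × ℤ)) (d : Bool) : (ℤ × ℤ) × (ℤ × ℤ) × (ℤ × ℤ) :=
  match t, d with
  | ((p, p'), (q, q'), (r, r')), false =>
      ((p, p'), (q ^ 2 * r' - q * q' * r - r, -(q' ^ 2) * r + q * q' * r' - r'), (q, q'))
  | ((p, p'), (q, q'), (r, r')), true =>
      ((q, q'), (-(q ^ 2) * p' + q * q' * p - p, q' ^ 2 * p - q * q' * p' - p'), (r, r'))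

/-- The parabolic fixed point tree `PT(ℓ)`, encoded on binary words. -/
def PTtree (l : ℤ) (w : List Bool) : (ℤ × ℤ) × (ℤ × ℤ) × (ℤ × ℤ) :=
  w.foldl ptStep ((1, -l - 1), (2, -2 * l + 1), (1, -l + 2))

/-- The scalar invariant on the determinant triple `(A, B, C)`. -/
def detInv (A B C : ℤ) : Prop :=
  A ≤ -2 ∧ 2 ≤ B ∧ C ≤ -2 ∧ B * (A + 1) ≤ C ∧ B + 1 ≤ A * C ∧ B * A ≤ A + C

lemma detInv_false {A B C : ℤ} (h : detInv A B C) : detInv (B * A - C) B A := by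
  obtain ⟨h1, h2, h3, h4, h5, h6⟩ := h
  have hB0 : (0 : ℤ) ≤ B := by linarith
  have hh : B * (B * A) ≤ B * (A + C) := mul_le_mul_of_nonneg_left h6 hB0
  have hx : (B - 2) * (A + 1) ≤ 0 :=
    mul_nonpos_of_nonneg_of_nonpos (by linarith) (by linarith)
  refine ⟨by nlinarith, h2, h1, by nlinarith, ?_, ?_⟩
  · -- B + 1 ≤ (B*A - C) * A, from A * (B*(A+1)) ≥ A*C (mult h4 by A ≤ 0)
    have := mul_le_mul_of_nonpos_left h4 (show A ≤ 0 by linarith)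
    nlinarith
  · -- B * (B*A - C) ≤ (B*A - C) + A
    have hd : B * A - C ≤ A := by linarith
    have := mul_le_mul_of_nonneg_left hd (show (0:ℤ) ≤ B - 1 by linarith)
    nlinarith

lemma detInv_true {A B C : ℤ} (h : detInv A B C) : detInv A (-(B * A) + C) (-B) := by
  obtain ⟨h1, h2, h3, h4, h5, h6⟩ := h
  have hA0 : A ≤ 0 := by linarith
  refine ⟨h1, by linarith, by linarith, ?_, by nlinarith, ?_⟩
  · -- (-(B*A)+C) * (A+1) ≤ -B
    have hkey : (C - B * (A + 1)) * (-(A + 1)) ≥ 0 :=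
      mul_nonneg (by linarith) (by linarith)
    nlinarith
  · -- (-(B*A)+C) * A ≤ A + (-B)
    have := mul_le_mul_of_nonpos_left h4 hA0
    nlinarith

def detA (t : (ℤ × ℤ) × (ℤ × ℤ) × (ℤ × ℤ)) : ℤ := t.2.1.1 * t.1.2 - t.2.1.2 * t.1.1
def detB (t : (ℤ × ℤ) × (ℤ × ℤ) × (ℤ × ℤ)) : ℤ := t.2.1.1 * t.2.2.2 - t.2.1.2 * t.2.2.1
def detC (t : (ℤ × ℤ) × (ℤ × ℤ) × (ℤ × ℤ)) : ℤ := t.2.2.1 * t.1.2 - t.2.2.2 * t.1.1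

def ptInv (t : (ℤ × ℤ) × (ℤ × ℤ) × (ℤ × ℤ)) : Prop :=
  detInv (detA t) (detB t) (detC t) ∧
  1 ≤ t.1.1 ∧ 1 ≤ t.2.2.1 ∧ t.1.1 < t.2.1.1 ∧ t.2.2.1 < t.2.1.1

lemma ptInv_step (t : (ℤ × ℤ) × (ℤ × ℤ) × (ℤ × ℤ)) (d : Bool) (h : ptInv t) :
    ptInv (ptStep t d) := by
  obtain ⟨⟨p, p'⟩, ⟨q, q'⟩, ⟨r, r'⟩⟩ := t
  obtain ⟨hd, hp, hr, hpq, hrq⟩ := h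
  have hA : q * p' - q' * p ≤ -2 := hd.1
  have hB : 2 ≤ q * r' - q' * r := hd.2.1
  have hq : (0 : ℤ) ≤ q := by linarith
  cases d
  · -- false branch
    have e1 : detA (ptStep ((p, p'), (q, q'), (r, r')) false)
        = (q * r' - q' * r) * (q * p' - q' * p) - (r * p' - r' * p) := by
      simp only [ptStep, detA]; try ring
    have e2 : detB (ptStep ((p, p'), (q, q'), (r, r')) false) = q * r' - q' * r := by
      simp only [ptStep, detB]; try ring
    have e3 : detC (ptStep ((p, p'), (q, q'), (r, r')) false) = q * p' - q' * p := by
      simp only [ptStep, detC]; try ring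
    refine ⟨?_, hp, ?_, ?_, ?_⟩
    · rw [e1, e2, e3]; exact detInv_false hd
    · show (1 : ℤ) ≤ q; linarith
    · show p < q ^ 2 * r' - q * q' * r - r
      nlinarith [mul_nonneg (show (0:ℤ) ≤ q * r' - q' * r - 2 by linarith) hq]
    · show q < q ^ 2 * r' - q * q' * r - r
      nlinarith [mul_nonneg (show (0:ℤ) ≤ q * r' - q' * r - 2 by linarith) hq]
  · -- true branch
    have e1 : detA (ptStep ((p, p'), (q, q'), (r, r')) true) = q * p' - q' * p := by
      simp only [ptStep, detA]; try ring
    have e2 : detB (ptStep ((p, p'), (q, q'), (r, r')) true)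
        = -((q * r' - q' * r) * (q * p' - q' * p)) + (r * p' - r' * p) := by
      simp only [ptStep, detB]; try ring
    have e3 : detC (ptStep ((p, p'), (q, q'), (r, r')) true) = -(q * r' - q' * r) := by
      simp only [ptStep, detC]; try ring
    refine ⟨?_, ?_, hr, ?_, ?_⟩
    · rw [e1, e2, e3]; exact detInv_true hd
    · show (1 : ℤ) ≤ q; linarith
    · show q < -(q ^ 2) * p' + q * q' * p - p
      nlinarith [mul_nonneg (show (0:ℤ) ≤ -(q * p' - q' * p) - 2 by linarith) hq]
    · show r < -(q ^ 2) * p' + q * q' * p - p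
      nlinarith [mul_nonneg (show (0:ℤ) ≤ -(q * p' - q' * p) - 2 by linarith) hq]

lemma ptInv_foldl (w : List Bool) (t : (ℤ × ℤ) × (ℤ × ℤ) × (ℤ × ℤ)) (h : ptInv t) :
    ptInv (w.foldl ptStep t) := by
  induction w generalizing t with
  | nil => exact h
  | cons d w ih => exact ih _ (ptInv_step t d h)

theorem stmt14 (l : ℤ) (w : List Bool) :
    (PTtree l w).2.1.1 * (PTtree l w).1.2 - (PTtree l w).2.1.2 * (PTtree l w).1.1 < -1 ∧
    (PTtree l w).2.1.1 * (PTtree l w).2.2.2 - (PTtree l w).2.1.2 * (PTtree l w).2.2.1 > 1 ∧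
    (PTtree l w).2.2.1 * (PTtree l w).1.2 - (PTtree l w).2.2.2 * (PTtree l w).1.1 < -1 ∧
    (PTtree l w).2.2.1 < (PTtree l w).2.1.1 ∧ (PTtree l w).1.1 < (PTtree l w).2.1.1 := by
  have h : ptInv (PTtree l w) := by
    apply ptInv_foldl
    refine ⟨⟨?_, ?_, ?_, ?_, ?_, ?_⟩, le_refl 1, le_refl 1, one_lt_two, one_lt_two⟩ <;>
      simp only [detA, detB, detC] <;> ring_nf <;> omega
  obtain ⟨⟨hA, hB, hC, _⟩, _, _, hpq, hrq⟩ := h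
  simp only [detA, detB, detC] at hA hB hC
  exact ⟨by omega, by omega, by omega, hrq, hpq⟩
end

section
/- Fix ℓ ∈ ℤ. For every binary word w, write V(w) = ((p,p'),(q,q'),(r,r')) for the vertex of the parabolic fixed point tree PT(ℓ) at w. Then (p,q,r) is a Markov triple, i.e., p² + q² + r² = 3·p·q·r with p, q, r positive; moreover the generation rules of PT(ℓ) realize the Vieta jumpings of Markov triples: q²r' − qq'r − r = 3pq − r and −q²p' + qq'p − p = 3qr − p. -/
def MInv (t : (ℤ × ℤ) × (ℤ × ℤ) × (ℤ × ℤ)) : Prop :=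
  match t with
  | ((p, p'), (q, q'), (r, r')) =>
      0 < p ∧ 0 < q ∧ 0 < r ∧ p ^ 2 + q ^ 2 + r ^ 2 = 3 * p * q * r ∧
      q * r' - q' * r = 3 * p ∧ p * q' - p' * q = 3 * r ∧
      p * r' - p' * r = 9 * p * r - 3 * q

lemma minv_step (t : (ℤ × ℤ) × (ℤ × ℤ) × (ℤ × ℤ)) (d : Bool) (h : MInv t) :
    MInv (ptStep t d) := by
  obtain ⟨⟨p, p'⟩, ⟨q, q'⟩, r, r'⟩ := t
  obtain ⟨hp, hq, hr, hM, h1, h2, h3⟩ := h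
  cases d
  · have e : q ^ 2 * r' - q * q' * r - r = 3 * p * q - r := by linear_combination q * h1
    refine ⟨hp, ?_, hq, by nlinarith, by nlinarith, by nlinarith, by nlinarith⟩
    rw [e]; nlinarith [sq_nonneg p, sq_nonneg q]
  · have e : -(q ^ 2) * p' + q * q' * p - p = 3 * q * r - p := by linear_combination q * h2
    refine ⟨hq, ?_, hr, by nlinarith, by nlinarith, by nlinarith, by nlinarith⟩
    rw [e]; nlinarith [sq_nonneg q, sq_nonneg r]

lemma minv_foldl (w : List Bool) (t : (ℤ × ℤ) × (ℤ × ℤ) × (ℤ × ℤ)) (h : MInv t) :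
    MInv (w.foldl ptStep t) := by
  induction w generalizing t with
  | nil => exact h
  | cons d w ih => exact ih _ (minv_step t d h)

theorem stmt16 (l : ℤ) (w : List Bool)
    (p p' q q' r r' : ℤ) (h : PTtree l w = ((p, p'), (q, q'), (r, r'))) :
    (0 < p ∧ 0 < q ∧ 0 < r ∧ p ^ 2 + q ^ 2 + r ^ 2 = 3 * p * q * r) ∧
    q ^ 2 * r' - q * q' * r - r = 3 * p * q - r ∧
    -(q ^ 2) * p' + q * q' * p - p = 3 * q * r - p := by
  have hinv : MInv (PTtree l w) := by
    apply minv_foldl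
    refine ⟨one_pos, two_pos, one_pos, by ring, by ring, by ring, by ring⟩
  rw [h] at hinv
  obtain ⟨hp, hq, hr, hM, h1, h2, h3⟩ := hinv
  exact ⟨⟨hp, hq, hr, hM⟩, by nlinarith, by nlinarith⟩
end

section
/- Fix ℓ ∈ ℤ. For every binary word w, write V(w) = ((p,p'),(q,q'),(r,r')) for the vertex of the parabolic fixed point tree PT(ℓ) at w. Then the three 2×2 determinants formed from these column vectors satisfy: q·r' − q'·r = 3p, p·q' − p'·q = 3r, and q·(p·r' − p'·r) = 3·(p² + r²); that is, (det[q r; q' r'], det[p r; p' r'], det[p q; p' q']) = 3·(p, (p² + r²)/q, r). -/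
/-- The invariant preserved along the tree. -/
def PTinv (t : (ℤ × ℤ) × (ℤ × ℤ) × (ℤ × ℤ)) : Prop :=
  match t with
  | ((p, p'), (q, q'), (r, r')) =>
      q * r' - q' * r = 3 * p ∧
      p * q' - p' * q = 3 * r ∧
      p * r' - p' * r = 9 * p * r - 3 * q ∧
      p ^ 2 + q ^ 2 + r ^ 2 = 3 * p * q * r

lemma PTinv_step (t : (ℤ × ℤ) × (ℤ × ℤ) × (ℤ × ℤ)) (d : Bool)
    (h : PTinv t) : PTinv (ptStep t d) := by
  obtain ⟨⟨p, p'⟩, ⟨q, q'⟩, ⟨r, r'⟩⟩ := t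
  obtain ⟨ha, hb, hd, hm⟩ := h
  cases d <;> simp only [ptStep, PTinv] <;> refine ⟨?_, ?_, ?_, ?_⟩
  · linear_combination ha
  · linear_combination (p * q' - p' * q) * ha + 3 * p * hb - hd
  · linear_combination 3 * q * ha + hb
  · linear_combination (q * (3 * p * q - 2 * r) + q ^ 2 * (q * r' - q' * r - 3 * p)) * ha + hm
  · linear_combination (q * r' - q' * r) * hb + 3 * r * ha - hd
  · linear_combination hb
  · linear_combination 3 * q * hb + ha
  · linear_combination (q * (3 * q * r - 2 * p) + q ^ 2 * (p * q' - p' * q - 3 * r)) * hb + hm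

lemma PTinv_tree (l : ℤ) (w : List Bool) : PTinv (PTtree l w) := by
  have : ∀ (w : List Bool) (t : (ℤ × ℤ) × (ℤ × ℤ) × (ℤ × ℤ)),
      PTinv t → PTinv (w.foldl ptStep t) := by
    intro w
    induction w with
    | nil => intro t h; exact h
    | cons d w ih => intro t h; exact ih _ (PTinv_step t d h)
  refine this w _ ⟨by ring, by ring, by ring, by ring⟩

theorem stmt17 (l : ℤ) (w : List Bool)
    (p p' q q' r r' : ℤ) (h : PTtree l w = ((p, p'), (q, q'), (r, r'))) :
    q * r' - q' * r = 3 * p ∧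
    p * q' - p' * q = 3 * r ∧
    q * (p * r' - p' * r) = 3 * (p ^ 2 + r ^ 2) := by
  have hi := PTinv_tree l w
  rw [h] at hi
  obtain ⟨ha, hb, hd, hm⟩ := hi
  exact ⟨ha, hb, by linear_combination q * hd - 3 * hm⟩
end
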